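/- arXiv:1001.2548 — 10 statements merged into one kernel-verified Lean document; each statement's English description precedes it below -/
import Mathlib

section
/- The subword complexity of the sequence 𝔭₂ is quadratic: there exist real constants c₁, c₂ > 0 and an integer m₀ such that for every integer m ≥ m₀ one has c₁ · m² ≤ p(𝔭₂, m) ≤ c₂ · m². (Equivalently, the complexity of the inverse of the Carlitz analogue Π₂ of π satisfies p(1/Π₂, m) = Θ(m²).) -/
/-!
The ones of `p2` sit exactly at the positions `onePos i = 2 i - s₂(i)`, `s₂` the binary digit
sum: for `i = ∑_{j ∈ K} 2^j` one has `∑_{j ∈ K} (2^(j+1) - 1) = 2 i - #K`. Since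
`s₂(t + 2^k a) = s₂(t) + s₂(a)` for `t < 2^k`, the sequence is a concatenation of copies of its
prefix `w_k` of length `L_k = 2^(k+1) - 1 - k`, separated by runs of at least `k` zeros, and a run
of exactly `k + e` zeros follows the copy number `2^e - 1`.

For `m ≤ L_k` every factor of length `m` therefore consists of a suffix of `w_k` of some length
`u ≤ L_k`, then `z ≤ m` zeros, then a prefix of `w_k`: at most `(L_k + 1)(m + 1)` factors.
Conversely all such words with `k ≤ z` and `u + z < m` occur, and they are pairwise distinct:
consecutive ones of `w_k` are at distance at most `k`, so the first one preceded by `k` zeros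
ends the run of zeros. With `k` least such that `m ≤ L_k`, both counts are of order `m²`.
-/

/-- The subword complexity of a sequence `a : ℕ → A`: the number of distinct
factors of length `m` occurring in `a`. -/
noncomputable def subwordComplexity {A : Type*} (a : ℕ → A) (m : ℕ) : ℕ :=
  Set.ncard { w : Fin m → A | ∃ j : ℕ, ∀ i : Fin m, w i = a (j + i) }

open Classical in
/-- The coefficient sequence 𝔭₂ of `1/Π₂`: `𝔭₂ n = 1` iff `n` is a sum of distinct
terms of the form `2^j - 1` with `j ≥ 1` (the empty sum giving `n = 0`). -/
noncomputable def p2 (n : ℕ) : Fin 2 :=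
  if ∃ J : Finset ℕ, (∀ j ∈ J, 1 ≤ j) ∧ n = ∑ j ∈ J, (2 ^ j - 1) then 1 else 0

namespace Nat

variable {b : ℕ}

theorem sum_digits_add_pow_mul (hb : 1 < b) {k t : ℕ} (ht : t < b ^ k) (a : ℕ) :
    (b.digits (t + b ^ k * a)).sum = (b.digits t).sum + (b.digits a).sum := by
  rcases Nat.eq_zero_or_pos a with rfl | ha
  · simp
  rw [← Nat.add_sub_cancel' ((digits_length_le_iff hb t).2 ht),
    ← digits_append_zeroes_append_digits hb ha]
  simp

theorem sum_digits_pow_mul (hb : 1 < b) (k a : ℕ) :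
    (b.digits (b ^ k * a)).sum = (b.digits a).sum := by
  simpa using sum_digits_add_pow_mul hb (pow_pos (zero_lt_of_lt hb) k) a

theorem sum_digits_pow (hb : 1 < b) (k : ℕ) : (b.digits (b ^ k)).sum = 1 := by
  simpa [digits_of_lt b 1 one_ne_zero hb] using sum_digits_pow_mul hb k 1

theorem sum_digits_pow_sub_one (hb : 1 < b) (k : ℕ) :
    (b.digits (b ^ k - 1)).sum = k * (b - 1) := by
  induction k with
  | zero => simp
  | succ k ih =>
    have hpow : b ^ (k + 1) - 1 = (b - 1) + b ^ 1 * (b ^ k - 1) := by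
      have := Nat.one_le_pow k b (zero_lt_of_lt hb)
      have := Nat.one_le_pow (k + 1) b (zero_lt_of_lt hb)
      zify [hb.le, *]
      ring
    rw [hpow, sum_digits_add_pow_mul hb (by rw [pow_one]; omega), ih,
      digits_of_lt b (b - 1) (by omega) (by omega)]
    simp only [List.sum_cons, List.sum_nil]
    ring

theorem sum_digits_sum_pow (hb : 1 < b) (K : Finset ℕ) :
    (b.digits (∑ j ∈ K, b ^ j)).sum = K.card := by
  induction K using Finset.induction_on_max with
  | empty => simp
  | insert a K hlt ih =>
    rw [Finset.sum_insert fun h => (hlt a h).false, ← mul_one (b ^ a), add_comm,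
      sum_digits_add_pow_mul hb (Nat.geomSum_lt hb hlt), ih,
      Finset.card_insert_of_notMem fun h => (hlt a h).false, digits_of_lt b 1 one_ne_zero hb]
    simp

theorem sum_digits_two_mul (n : ℕ) : (digits 2 (2 * n)).sum = (digits 2 n).sum := by
  simpa using sum_digits_pow_mul one_lt_two 1 n

theorem sum_digits_two_mul_add_one (n : ℕ) :
    (digits 2 (2 * n + 1)).sum = (digits 2 n).sum + 1 := by
  have := sum_digits_add_pow_mul one_lt_two (k := 1) (t := 1) (by norm_num) n
  rw [pow_one, digits_of_lt 2 1 one_ne_zero one_lt_two] at this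
  rw [add_comm, this, List.sum_singleton, add_comm]

theorem sum_digits_succ_le (n : ℕ) : (digits 2 (n + 1)).sum ≤ (digits 2 n).sum + 1 := by
  induction n using Nat.strong_induction_on with
  | _ n ih =>
    obtain ⟨q, rfl | rfl⟩ := n.even_or_odd'
    · rw [sum_digits_two_mul_add_one, sum_digits_two_mul]
    · rw [show 2 * q + 1 + 1 = 2 * (q + 1) by ring, sum_digits_two_mul,
        sum_digits_two_mul_add_one]
      exact (ih q (by omega)).trans (Nat.le_succ _)

theorem sum_digits_add_two_le {k n : ℕ} (hn : n + 1 < 2 ^ k) :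
    (digits 2 n).sum + 2 ≤ (digits 2 (n + 1)).sum + k := by
  induction k generalizing n with
  | zero => simp at hn
  | succ k ih =>
    obtain ⟨q, rfl | rfl⟩ := n.even_or_odd'
    · rw [sum_digits_two_mul_add_one, sum_digits_two_mul]
      omega
    · rw [show 2 * q + 1 + 1 = 2 * (q + 1) by ring, sum_digits_two_mul,
        sum_digits_two_mul_add_one]
      have := ih (n := q) (by rw [pow_succ] at hn; omega)
      omega

theorem three_mul_le_two_pow {n : ℕ} (hn : 4 ≤ n) : 3 * n ≤ 2 ^ n := by
  induction n, hn using Nat.le_induction with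
  | base => norm_num
  | succ n _ ih => rw [pow_succ]; omega

end Nat

theorem StrictMono.exists_le_and_lt_succ {f : ℕ → ℕ} (hf : StrictMono f) {j : ℕ} (hj : f 0 ≤ j) :
    ∃ a, f a ≤ j ∧ j < f (a + 1) := by
  have hex : ∃ a, j < f (a + 1) := ⟨j, (j.lt_succ_self).trans_le (hf.id_le _)⟩
  refine ⟨Nat.find hex, ?_, Nat.find_spec hex⟩
  rcases h : Nat.find hex with _ | a
  · exact hj
  · exact not_lt.1 (Nat.find_min hex (h ▸ a.lt_succ_self))

namespace P2

open Nat Finset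

def onePos (i : ℕ) : ℕ := 2 * i - (digits 2 i).sum

theorem onePos_add_sum_digits (i : ℕ) : onePos i + (digits 2 i).sum = 2 * i := by
  have := digit_sum_le 2 i
  unfold onePos
  omega

theorem onePos_zero : onePos 0 = 0 := by simp [onePos]

theorem onePos_strictMono : StrictMono onePos := by
  refine strictMono_nat_of_lt_succ fun n => ?_
  have := onePos_add_sum_digits n
  have := onePos_add_sum_digits (n + 1)
  have := sum_digits_succ_le n
  omega

theorem onePos_succ_le {k n : ℕ} (hn : n + 1 < 2 ^ k) : onePos (n + 1) ≤ onePos n + k := by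
  have := onePos_add_sum_digits n
  have := onePos_add_sum_digits (n + 1)
  have := sum_digits_add_two_le hn
  omega

theorem onePos_add_two_pow_mul {k t : ℕ} (ht : t < 2 ^ k) (a : ℕ) :
    onePos (t + 2 ^ k * a) = onePos t + onePos (2 ^ k * a) := by
  have h := onePos_add_sum_digits (t + 2 ^ k * a)
  have ht' := onePos_add_sum_digits t
  have ha := onePos_add_sum_digits (2 ^ k * a)
  rw [sum_digits_add_pow_mul one_lt_two ht] at h
  rw [sum_digits_pow_mul one_lt_two] at ha
  omega

theorem onePos_sum_two_pow (K : Finset ℕ) :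
    onePos (∑ j ∈ K, 2 ^ j) = ∑ j ∈ K, (2 ^ (j + 1) - 1) := by
  have h := onePos_add_sum_digits (∑ j ∈ K, 2 ^ j)
  have hsum : ∑ j ∈ K, (2 ^ (j + 1) - 1) + K.card = 2 * ∑ j ∈ K, 2 ^ j := by
    rw [card_eq_sum_ones, ← sum_add_distrib, mul_sum]
    exact sum_congr rfl fun j _ => by rw [Nat.sub_add_cancel Nat.one_le_two_pow, pow_succ']
  rw [sum_digits_sum_pow one_lt_two] at h
  omega

theorem exists_sum_two_pow_sub_one_iff (n : ℕ) :
    (∃ J : Finset ℕ, (∀ j ∈ J, 1 ≤ j) ∧ n = ∑ j ∈ J, (2 ^ j - 1)) ↔ n ∈ Set.range onePos := by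
  constructor
  · rintro ⟨J, hJ, rfl⟩
    refine ⟨∑ j ∈ J.image (· - 1), 2 ^ j, ?_⟩
    rw [onePos_sum_two_pow, sum_image fun x hx y hy h => by
      have := hJ x hx; have := hJ y hy; omega]
    exact sum_congr rfl fun j hj => by rw [Nat.sub_add_cancel (hJ j hj)]
  · rintro ⟨i, rfl⟩
    refine ⟨i.bitIndices.toFinset.image (· + 1), by simp, ?_⟩
    rw [sum_image fun x _ y _ h => by simpa using h, ← onePos_sum_two_pow,
      sum_toFinset_bitIndices_two_pow]

open Classical in
theorem p2_eq_ite (n : ℕ) :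
    p2 n = if n ∈ Set.range onePos then 1 else 0 := by
  simp only [p2, exists_sum_two_pow_sub_one_iff]

def blockLen (k : ℕ) : ℕ := onePos (2 ^ k - 1) + 1

theorem blockLen_add_add_one (k : ℕ) : blockLen k + k + 1 = 2 ^ (k + 1) := by
  have h := onePos_add_sum_digits (2 ^ k - 1)
  have := Nat.one_le_two_pow (n := k)
  rw [sum_digits_pow_sub_one one_lt_two] at h
  rw [blockLen, pow_succ]
  omega

theorem onePos_lt_blockLen_iff {k t : ℕ} : onePos t < blockLen k ↔ t < 2 ^ k := by
  rw [blockLen, Nat.lt_add_one_iff, onePos_strictMono.le_iff_le]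
  have := Nat.one_le_two_pow (n := k)
  omega

theorem onePos_two_pow_mul_succ_add (k a : ℕ) :
    onePos (2 ^ k * (a + 1)) + (digits 2 (a + 1)).sum
      = onePos (2 ^ k * a) + (digits 2 a).sum + 2 ^ (k + 1) := by
  have h := onePos_add_sum_digits (2 ^ k * (a + 1))
  have h' := onePos_add_sum_digits (2 ^ k * a)
  rw [sum_digits_pow_mul one_lt_two] at h h'
  rw [pow_succ]
  linarith

theorem onePos_two_pow_mul_add_blockLen_le (k a : ℕ) :
    onePos (2 ^ k * a) + blockLen k + k ≤ onePos (2 ^ k * (a + 1)) := by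
  have := onePos_two_pow_mul_succ_add k a
  have := sum_digits_succ_le a
  have := blockLen_add_add_one k
  omega

theorem onePos_two_pow_mul_two_pow (k e : ℕ) :
    onePos (2 ^ k * 2 ^ e) = onePos (2 ^ k * (2 ^ e - 1)) + blockLen k + (k + e) := by
  have h := onePos_two_pow_mul_succ_add k (2 ^ e - 1)
  rw [Nat.sub_add_cancel Nat.one_le_two_pow, sum_digits_pow one_lt_two,
    sum_digits_pow_sub_one one_lt_two] at h
  have := blockLen_add_add_one k
  omega

theorem mem_range_onePos_iff_of_mem_block {k a n : ℕ} (h₁ : onePos (2 ^ k * a) ≤ n)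
    (h₂ : n < onePos (2 ^ k * (a + 1))) :
    n ∈ Set.range onePos ↔ n - onePos (2 ^ k * a) ∈ onePos '' Set.Iio (2 ^ k) := by
  constructor
  · rintro ⟨i, rfl⟩
    obtain ⟨t, rfl⟩ := Nat.exists_eq_add_of_le' (onePos_strictMono.le_iff_le.1 h₁)
    have ht : t < 2 ^ k := by
      have := onePos_strictMono.lt_iff_lt.1 h₂
      rw [mul_add_one] at this
      omega
    exact ⟨t, ht, by rw [onePos_add_two_pow_mul ht]; omega⟩
  · rintro ⟨t, ht, hteq⟩
    exact ⟨t + 2 ^ k * a, by rw [onePos_add_two_pow_mul ht, hteq]; omega⟩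

open Classical in
/-- The prefix `w_k` of `p2` of length `blockLen k`, followed by zeros. -/
noncomputable def blockWord (k r : ℕ) : Fin 2 :=
  if r ∈ onePos '' Set.Iio (2 ^ k) then 1 else 0

theorem blockWord_eq_one_iff {k r : ℕ} : blockWord k r = 1 ↔ r ∈ onePos '' Set.Iio (2 ^ k) := by
  unfold blockWord
  split_ifs with h <;> simp [h]

open Classical in
theorem p2_eq_blockWord {k a n : ℕ} (h₁ : onePos (2 ^ k * a) ≤ n)
    (h₂ : n < onePos (2 ^ k * (a + 1))) : p2 n = blockWord k (n - onePos (2 ^ k * a)) := by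
  rw [p2_eq_ite, blockWord]
  exact if_congr (mem_range_onePos_iff_of_mem_block h₁ h₂) rfl rfl

theorem blockWord_eq_zero {k r : ℕ} (h : blockLen k ≤ r) : blockWord k r = 0 := by
  rw [blockWord, if_neg]
  rintro ⟨t, ht, rfl⟩
  exact (onePos_lt_blockLen_iff.2 ht).not_ge h

theorem blockWord_zero (k : ℕ) : blockWord k 0 = 1 :=
  blockWord_eq_one_iff.2 ⟨0, Nat.two_pow_pos k, onePos_zero⟩

theorem blockWord_blockLen_sub_one (k : ℕ) : blockWord k (blockLen k - 1) = 1 :=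
  blockWord_eq_one_iff.2 ⟨2 ^ k - 1, Nat.sub_lt (Nat.two_pow_pos k) one_pos, rfl⟩

theorem exists_blockWord_eq_one_of_pos {k r : ℕ} (h : blockWord k r = 1) (hr : 0 < r) :
    ∃ q < r, r ≤ q + k ∧ blockWord k q = 1 := by
  obtain ⟨t, ht, rfl⟩ := blockWord_eq_one_iff.1 h
  obtain ⟨n, rfl⟩ : ∃ n, t = n + 1 :=
    Nat.exists_eq_succ_of_ne_zero (by rintro rfl; simp [onePos_zero] at hr)
  exact ⟨onePos n, onePos_strictMono n.lt_succ_self, onePos_succ_le ht,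
    blockWord_eq_one_iff.2 ⟨n, Nat.lt_of_succ_lt ht, rfl⟩⟩

theorem exists_mem_block (k j : ℕ) :
    ∃ a, onePos (2 ^ k * a) ≤ j ∧ j < onePos (2 ^ k * (a + 1)) :=
  (onePos_strictMono.comp (strictMono_mul_left_of_pos (Nat.two_pow_pos k))).exists_le_and_lt_succ
    (by simp [onePos_zero])

/-- For `u ≤ blockLen k`: the last `u` letters of `w_k`, then `z` zeros, then `blockWord k`. -/
noncomputable def window (k u z t : ℕ) : Fin 2 :=
  if t < u + z then blockWord k (blockLen k - u + t) else blockWord k (t - (u + z))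

theorem window_of_lt {k u z t : ℕ} (h : t < u + z) :
    window k u z t = blockWord k (blockLen k - u + t) :=
  if_pos h

theorem window_of_le {k u z t : ℕ} (h : u + z ≤ t) : window k u z t = blockWord k (t - (u + z)) :=
  if_neg (not_lt.2 h)

theorem window_eq_zero {k u z t : ℕ} (h₁ : u ≤ t) (h₂ : t < u + z) : window k u z t = 0 := by
  rw [window_of_lt h₂, blockWord_eq_zero (by omega)]

theorem window_sub_one {k u z : ℕ} (hu : 0 < u) (huL : u ≤ blockLen k) :
    window k u z (u - 1) = 1 := by
  rw [window_of_lt (by omega), show blockLen k - u + (u - 1) = blockLen k - 1 by omega,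
    blockWord_blockLen_sub_one]

theorem exists_window_eq_p2 {k m : ℕ} (hm : m ≤ blockLen k) (j : ℕ) :
    ∃ u ≤ blockLen k, ∃ z ≤ m, ∀ t < m, p2 (j + t) = window k u z t := by
  obtain ⟨a, ha₁, ha₂⟩ := exists_mem_block k j
  have hgap := onePos_two_pow_mul_add_blockLen_le k a
  have hgap' := onePos_two_pow_mul_add_blockLen_le k (a + 1)
  refine ⟨blockLen k - (j - onePos (2 ^ k * a)), by omega,
    min (onePos (2 ^ k * (a + 1)) - j) m - (blockLen k - (j - onePos (2 ^ k * a))), by omega,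
    fun t ht => ?_⟩
  by_cases hjt : j + t < onePos (2 ^ k * (a + 1))
  · rw [p2_eq_blockWord (by omega) hjt, window_of_lt (by omega)]
    by_cases hL : j + t - onePos (2 ^ k * a) < blockLen k
    · congr 1
      omega
    · rw [blockWord_eq_zero (by omega), blockWord_eq_zero (by omega)]
  · rw [p2_eq_blockWord (k := k) (a := a + 1) (by omega) (by omega), window_of_le (by omega)]
    congr 1
    omega

theorem exists_p2_eq_window {k m u z : ℕ} (hm : m ≤ blockLen k) (hu : u ≤ blockLen k)
    (hz : k ≤ z) : ∃ j, ∀ t < m, p2 (j + t) = window k u z t := by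
  obtain ⟨a, ha⟩ : ∃ a, a + 1 = 2 ^ (z - k) := ⟨_, Nat.sub_add_cancel Nat.one_le_two_pow⟩
  have hgap : onePos (2 ^ k * (a + 1)) = onePos (2 ^ k * a) + blockLen k + z := by
    have := onePos_two_pow_mul_two_pow k (z - k)
    rw [← ha, Nat.add_sub_cancel] at this
    omega
  have hgap' := onePos_two_pow_mul_add_blockLen_le k (a + 1)
  refine ⟨onePos (2 ^ k * a) + (blockLen k - u), fun t ht => ?_⟩
  by_cases htuz : t < u + z
  · rw [p2_eq_blockWord (k := k) (a := a) (by omega) (by omega), window_of_lt htuz]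
    congr 1
    omega
  · rw [p2_eq_blockWord (k := k) (a := a + 1) (by omega) (by omega), window_of_le (by omega)]
    congr 1
    omega

def IsMarker (w : ℕ → Fin 2) (k p : ℕ) : Prop :=
  k ≤ p ∧ w p = 1 ∧ ∀ q < p, p ≤ q + k → w q = 0

theorem IsMarker.congr {w w' : ℕ → Fin 2} {k p : ℕ} (h : IsMarker w k p)
    (hw : ∀ t ≤ p, w t = w' t) : IsMarker w' k p := by
  obtain ⟨hkp, hone, hzero⟩ := h
  exact ⟨hkp, hw p le_rfl ▸ hone, fun q hq hqk => hw q hq.le ▸ hzero q hq hqk⟩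

theorem isMarker_window {k u z : ℕ} (hz : k ≤ z) : IsMarker (window k u z) k (u + z) := by
  refine ⟨hz.trans (Nat.le_add_left z u), ?_, fun q hq hqk => window_eq_zero (by omega) hq⟩
  rw [window_of_le le_rfl, Nat.sub_self, blockWord_zero]

theorem IsMarker.eq_of_window {k u z p : ℕ} (hu : u < blockLen k)
    (h : IsMarker (window k u z) k p) : p = u + z := by
  obtain ⟨hkp, hone, hzero⟩ := h
  by_contra hne
  rcases Nat.lt_or_gt_of_ne hne with hp | hp
  · rw [window_of_lt hp] at hone
    obtain ⟨q, hq, hqk, hq₁⟩ := exists_blockWord_eq_one_of_pos hone (by omega)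
    have h₀ := hzero (q - (blockLen k - u)) (by omega) (by omega)
    rw [window_of_lt (by omega), show blockLen k - u + (q - (blockLen k - u)) = q by omega,
      hq₁] at h₀
    exact one_ne_zero h₀
  · rw [window_of_le hp.le] at hone
    obtain ⟨q, hq, hqk, hq₁⟩ := exists_blockWord_eq_one_of_pos hone (by omega)
    have h₀ := hzero (q + (u + z)) (by omega) (by omega)
    rw [window_of_le (by omega), Nat.add_sub_cancel, hq₁] at h₀
    exact one_ne_zero h₀

theorem le_of_window_eqOn {k m u z u' z' : ℕ} (hu : u ≤ blockLen k) (huz : u + z = u' + z')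
    (hm : u + z < m) (h : Set.EqOn (window k u z) (window k u' z') (Set.Iio m)) : u ≤ u' := by
  by_contra! hlt
  have := h (Set.mem_Iio.2 (show u - 1 < m by omega))
  rw [window_sub_one (by omega) hu, window_eq_zero (by omega) (by omega)] at this
  exact one_ne_zero this

theorem eq_of_window_eqOn {k m u z u' z' : ℕ} (hm : m ≤ blockLen k) (hz : k ≤ z)
    (huz : u + z < m) (huz' : u' + z' < m)
    (h : Set.EqOn (window k u z) (window k u' z') (Set.Iio m)) : u = u' ∧ z = z' := by
  have hsum : u + z = u' + z' :=
    ((isMarker_window hz).congr fun t ht => h (Set.mem_Iio.2 (by omega))).eq_of_window (by omega)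
  have := le_of_window_eqOn (by omega) hsum huz h
  have := le_of_window_eqOn (by omega) hsum.symm huz' h.symm
  omega

theorem subwordComplexity_p2_le {k m : ℕ} (hm : m ≤ blockLen k) :
    subwordComplexity p2 m ≤ (blockLen k + 1) * (m + 1) := by
  let W : ℕ × ℕ → Fin m → Fin 2 := fun uz t => window k uz.1 uz.2 t
  let T := Finset.Iic (blockLen k) ×ˢ Finset.Iic m
  have hsub : {w : Fin m → Fin 2 | ∃ j : ℕ, ∀ i : Fin m, w i = p2 (j + i)} ⊆ T.image W := by
    rintro w ⟨j, hw⟩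
    obtain ⟨u, hu, z, hz, h⟩ := exists_window_eq_p2 hm j
    refine Finset.mem_image.2 ⟨(u, z), by simp [T, hu, hz], funext fun i => ?_⟩
    simp [W, hw, h i i.isLt]
  calc subwordComplexity p2 m ≤ (T.image W).card := by
        rw [subwordComplexity, ← Set.ncard_coe_finset]
        exact Set.ncard_le_ncard hsub (Finset.finite_toSet _)
    _ ≤ T.card := Finset.card_image_le
    _ = (blockLen k + 1) * (m + 1) := by simp [T]

theorem sq_le_subwordComplexity_p2 {k m M : ℕ} (hm : m ≤ blockLen k) (hM : k + 2 * M ≤ m) :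
    M ^ 2 ≤ subwordComplexity p2 m := by
  let W : ℕ × ℕ → Fin m → Fin 2 := fun uz t => window k uz.1 uz.2 t
  let T := Finset.range M ×ˢ Finset.Ico k (k + M)
  have hT : ∀ uz ∈ T, k ≤ uz.2 ∧ uz.1 + uz.2 < m := by
    simp only [T, Finset.mem_product, Finset.mem_range, Finset.mem_Ico]
    omega
  have hinj : Set.InjOn W T := by
    rintro ⟨u, z⟩ huz ⟨u', z'⟩ huz' hW
    obtain ⟨rfl, rfl⟩ := eq_of_window_eqOn hm (hT _ huz).1 (hT _ huz).2 (hT _ huz').2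
      fun t ht => congrFun hW ⟨t, ht⟩
    rfl
  have hsub : (T.image W : Set (Fin m → Fin 2))
      ⊆ {w : Fin m → Fin 2 | ∃ j : ℕ, ∀ i : Fin m, w i = p2 (j + i)} := by
    rw [Finset.coe_image]
    rintro _ ⟨⟨u, z⟩, huz, rfl⟩
    obtain ⟨j, hj⟩ := exists_p2_eq_window (u := u) hm (by have := hT _ huz; omega) (hT _ huz).1
    exact ⟨j, fun i => (hj i i.isLt).symm⟩
  calc M ^ 2 = T.card := by simp [T, sq]
    _ = (T.image W).card := (Finset.card_image_of_injOn hinj).symm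
    _ ≤ subwordComplexity p2 m := by
        rw [subwordComplexity, ← Set.ncard_coe_finset]
        exact Set.ncard_le_ncard hsub (Set.toFinite _)

theorem exists_blockLen_bounds {m : ℕ} (hm : 6 ≤ m) :
    ∃ k, m ≤ blockLen k ∧ blockLen k ≤ 3 * m ∧ 2 * k ≤ m := by
  classical
  have hex : ∃ k, m ≤ blockLen k := by
    refine ⟨m, ?_⟩
    have := blockLen_add_add_one m
    have := m.lt_two_pow_self
    rw [pow_succ] at *
    omega
  obtain ⟨k, hk, hmin⟩ : ∃ k, m ≤ blockLen k ∧ ∀ k' < k, blockLen k' < m :=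
    ⟨Nat.find hex, Nat.find_spec hex, fun k' h => not_le.1 (Nat.find_min hex h)⟩
  cases k with
  | zero =>
    have := blockLen_add_add_one 0
    omega
  | succ k =>
    have hprev := hmin k k.lt_succ_self
    have h₁ := blockLen_add_add_one k
    have h₂ := blockLen_add_add_one (k + 1)
    have h₃ := k.lt_two_pow_self
    rw [pow_succ] at h₁
    rw [pow_succ, pow_succ] at h₂
    refine ⟨k + 1, hk, by omega, ?_⟩
    rcases le_or_gt 3 k with h | h
    · have := three_mul_le_two_pow (n := k + 1) (by omega)
      rw [pow_succ] at this
      omega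
    · omega

end P2

/-- The subword complexity of `𝔭₂` (i.e. of `1/Π₂`) is `Θ(m²)`. -/
theorem complexity_p2_theta_quadratic :
    ∃ c₁ c₂ : ℝ, 0 < c₁ ∧ 0 < c₂ ∧ ∃ m₀ : ℕ, ∀ m : ℕ, m₀ ≤ m →
      c₁ * (m : ℝ) ^ 2 ≤ (subwordComplexity p2 m : ℝ) ∧
      (subwordComplexity p2 m : ℝ) ≤ c₂ * (m : ℝ) ^ 2 := by
  refine ⟨1 / 64, 5, by norm_num, by norm_num, 6, fun m hm => ?_⟩
  obtain ⟨k, hmk, hkm, hk⟩ := P2.exists_blockLen_bounds hm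
  have hlow : (m / 4) ^ 2 ≤ subwordComplexity p2 m :=
    P2.sq_le_subwordComplexity_p2 hmk (by omega)
  have hup : subwordComplexity p2 m ≤ (3 * m + 1) * (m + 1) :=
    (P2.subwordComplexity_p2_le hmk).trans (Nat.mul_le_mul_right _ (by omega))
  have h8 : (m : ℝ) ≤ 8 * ((m / 4 : ℕ) : ℝ) := by exact_mod_cast (by omega : m ≤ 8 * (m / 4))
  have hm6 : (6 : ℝ) ≤ m := by exact_mod_cast hm
  constructor
  · have : ((m / 4 : ℕ) : ℝ) ^ 2 ≤ subwordComplexity p2 m := by exact_mod_cast hlow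
    nlinarith
  · have : (subwordComplexity p2 m : ℝ) ≤ (3 * m + 1) * (m + 1) := by exact_mod_cast hup
    nlinarith
end

section
/- For every integer m ≥ 1, the subword complexity of 𝔭₂ satisfies the lower bound (p(𝔭₂, m) : ℝ) ≥ (m − log₂ m)(m − log₂ m + 1)/2, where log₂ denotes the base-2 logarithm (Real.logb 2). -/
/-!
Extending factors of length `k` by one letter gives `p(k + 1) ≥ p(k) + s(k)`, where `s(k)` counts
the right special factors of length `k` (those with two occurrences followed by different letters).
For `n < 2 ^ (M + 1) - 1` one has `𝔭₂(2 ^ (M + 1) - 1 + n) = 𝔭₂(n)`, so the prefix of length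
`2 ^ (M + 1) - 1` reappears right after itself, followed by `𝔭₂(2 ^ (M + 2) - 2) = 0` instead of
`𝔭₂(2 ^ (M + 1) - 1) = 1`; hence each of its suffixes is right special. For fixed `k` the suffixes
of length `k` with `log₂ k ≤ M ≤ k` are pairwise distinct, because for `i ≤ M` the number
`2 ^ (M + 1) - 2 - i` is a sum of distinct `2 ^ j - 1` only when `i = M`. Thus
`s(k) ≥ k + 1 - ⌊log₂ k⌋`, and summing gives `2 p(m) ≥ (m - g)(m - g + 1)` with `g = ⌊log₂ m⌋`.
-/


open Finset

section Factors

variable {A : Type*} (a : ℕ → A)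

def factorAt (k j : ℕ) : Fin k → A := fun i => a (j + i)

def IsRightSpecial {k : ℕ} (w : Fin k → A) : Prop :=
  ∃ j j', factorAt a k j = w ∧ factorAt a k j' = w ∧ a (j + k) ≠ a (j' + k)

variable {a}

theorem subwordComplexity_eq_ncard_range (k : ℕ) :
    subwordComplexity a k = (Set.range (factorAt a k)).ncard := by
  refine congrArg Set.ncard (Set.ext fun w => ?_)
  simp only [Set.mem_ofPred_eq, Set.mem_range, funext_iff, factorAt, eq_comm]

theorem subwordComplexity_zero : subwordComplexity a 0 = 1 := by
  rw [subwordComplexity_eq_ncard_range, Set.ncard_eq_one]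
  exact ⟨factorAt a 0 0, Set.range_eq_singleton_iff.2 fun _ => Subsingleton.elim _ _⟩

theorem init_factorAt_succ (k j : ℕ) : Fin.init (factorAt a (k + 1) j) = factorAt a k j := rfl

theorem IsRightSpecial.exists_ne {k : ℕ} {w : Fin k → A} (hw : IsRightSpecial a w) (x : A) :
    ∃ j, factorAt a k j = w ∧ a (j + k) ≠ x := by
  obtain ⟨j, j', hj, hj', hne⟩ := hw
  by_cases hx : a (j + k) = x
  · exact ⟨j', hj', hx ▸ hne.symm⟩
  · exact ⟨j, hj, hx⟩

theorem ncard_range_factorAt_add_ncard_rightSpecial_le [Finite A] (k : ℕ) :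
    (Set.range (factorAt a k)).ncard + {w : Fin k → A | IsRightSpecial a w}.ncard ≤
      (Set.range (factorAt a (k + 1))).ncard := by
  set F := Set.range (factorAt a k)
  set S := {w : Fin k → A | IsRightSpecial a w}
  set occ := Function.invFun (factorAt a k)
  have hocc : ∀ w ∈ F, factorAt a k (occ w) = w := fun w hw => Function.invFun_eq hw
  choose! occ' hocc' hne using fun (w : Fin k → A) (hw : IsRightSpecial a w) =>
    hw.exists_ne (a (occ w + k))
  let extend (f : (Fin k → A) → ℕ) (w : Fin k → A) : Fin (k + 1) → A := factorAt a (k + 1) (f w)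
  have hinj : ∀ (f : (Fin k → A) → ℕ) (s : Set (Fin k → A)),
      (∀ w ∈ s, factorAt a k (f w) = w) → Set.InjOn (extend f) s := fun f s hf =>
    Set.LeftInvOn.injOn (f₁' := Fin.init) hf
  have hdisj : Disjoint (extend occ '' F) (extend occ' '' S) := by
    refine Set.disjoint_left.2 ?_
    rintro _ ⟨w, hw, rfl⟩ ⟨w', hw', heq⟩
    obtain rfl : w' = w := by
      simpa only [extend, init_factorAt_succ, hocc w hw, hocc' w' hw'] using congrArg Fin.init heq
    exact hne w' hw' (congrFun heq (Fin.last k))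
  calc F.ncard + S.ncard = (extend occ '' F ∪ extend occ' '' S).ncard := by
        rw [Set.ncard_union_eq hdisj, (hinj occ F hocc).ncard_image,
          (hinj occ' S hocc').ncard_image]
    _ ≤ (Set.range (factorAt a (k + 1))).ncard := Set.ncard_le_ncard <| Set.union_subset
        (Set.image_subset_iff.2 fun _ _ => Set.mem_range_self _)
        (Set.image_subset_iff.2 fun _ _ => Set.mem_range_self _)

theorem one_add_sum_ncard_rightSpecial_le [Finite A] (m : ℕ) :
    1 + ∑ k ∈ range m, {w : Fin k → A | IsRightSpecial a w}.ncard ≤ subwordComplexity a m := by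
  induction m with
  | zero => simp [subwordComplexity_zero]
  | succ m ih =>
    rw [sum_range_succ, subwordComplexity_eq_ncard_range]
    have := ncard_range_factorAt_add_ncard_rightSpecial_le (a := a) m
    rw [subwordComplexity_eq_ncard_range] at ih
    omega

end Factors

section MersenneSums

def IsDistinctMersenneSum (n : ℕ) : Prop :=
  ∃ J : Finset ℕ, (∀ j ∈ J, 1 ≤ j) ∧ n = ∑ j ∈ J, (2 ^ j - 1)

theorem sum_Icc_two_pow_sub_one_add (L : ℕ) :
    ∑ j ∈ Icc 1 L, (2 ^ j - 1) + (L + 2) = 2 ^ (L + 1) := by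
  induction L with
  | zero => simp
  | succ L ih =>
    rw [sum_Icc_succ_top (by omega), pow_succ 2 (L + 1)]
    have : 1 ≤ 2 ^ (L + 1) := Nat.one_le_two_pow
    omega

theorem le_of_mem_of_sum_two_pow_sub_one_lt {J : Finset ℕ} {L j : ℕ}
    (hJ : ∑ j ∈ J, (2 ^ j - 1) < 2 ^ (L + 1) - 1) (hj : j ∈ J) : j ≤ L := by
  have hle := single_le_sum (f := fun j => 2 ^ j - 1) (fun _ _ => Nat.zero_le _) hj
  have : 1 ≤ 2 ^ j := Nat.one_le_two_pow
  exact Nat.lt_succ_iff.1 ((Nat.pow_lt_pow_iff_right one_lt_two).1 (by omega))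

theorem sum_two_pow_sub_one_add_le {J : Finset ℕ} {L : ℕ} (hJ₁ : ∀ j ∈ J, 1 ≤ j)
    (hJL : ∀ j ∈ J, j ≤ L) : ∑ j ∈ J, (2 ^ j - 1) + (L + 2) ≤ 2 ^ (L + 1) :=
  sum_Icc_two_pow_sub_one_add L ▸ Nat.add_le_add_right
    (sum_le_sum_of_subset fun j hj => mem_Icc.2 ⟨hJ₁ j hj, hJL j hj⟩) _

/-- Below `2 ^ (L + 1) - 1`, the largest sum of distinct `2 ^ j - 1` is `2 ^ (L + 1) - L - 2`. -/
theorem IsDistinctMersenneSum.add_le {n L : ℕ} (hn : IsDistinctMersenneSum n)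
    (hlt : n < 2 ^ (L + 1) - 1) : n + (L + 2) ≤ 2 ^ (L + 1) := by
  obtain ⟨J, hJ₁, rfl⟩ := hn
  exact sum_two_pow_sub_one_add_le hJ₁ fun _ => le_of_mem_of_sum_two_pow_sub_one_lt hlt

theorem isDistinctMersenneSum_zero : IsDistinctMersenneSum 0 := ⟨∅, by simp, by simp⟩

theorem isDistinctMersenneSum_two_pow_sub_one_add_iff {M n : ℕ} (hn : n < 2 ^ (M + 1) - 1) :
    IsDistinctMersenneSum (2 ^ (M + 1) - 1 + n) ↔ IsDistinctMersenneSum n := by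
  have hpow : 2 ^ (M + 2) = 2 * 2 ^ (M + 1) := pow_succ' 2 (M + 1)
  constructor
  · rintro ⟨J, hJ₁, hsum⟩
    have hM : M + 1 ∈ J := by
      by_contra hM
      have hJM : ∀ j ∈ J, j ≤ M := fun j hj => by
        have := le_of_mem_of_sum_two_pow_sub_one_lt (L := M + 1) (by omega) hj
        have := ne_of_mem_of_not_mem hj hM
        omega
      have := sum_two_pow_sub_one_add_le hJ₁ hJM
      omega
    refine ⟨J.erase (M + 1), fun j hj => hJ₁ j (mem_of_mem_erase hj), ?_⟩
    have := add_sum_erase J (fun j => 2 ^ j - 1) hM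
    omega
  · rintro ⟨J, hJ₁, rfl⟩
    have hM : M + 1 ∉ J := fun hM => by
      have := single_le_sum (f := fun j => 2 ^ j - 1) (fun _ _ => Nat.zero_le _) hM
      omega
    refine ⟨insert (M + 1) J, ?_, by rw [sum_insert hM]⟩
    simpa using hJ₁

theorem not_isDistinctMersenneSum_two_pow_sub_two (M : ℕ) :
    ¬ IsDistinctMersenneSum (2 ^ (M + 2) - 2) := fun h => by
  have : 2 ^ (M + 1 + 1) = 2 ^ (M + 2) := rfl
  have : 1 ≤ 2 ^ (M + 2) := Nat.one_le_two_pow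
  have := h.add_le (L := M + 1) (by omega)
  omega

theorem isDistinctMersenneSum_two_pow_sub_two_sub_iff {M i : ℕ} (hi : i ≤ M) :
    IsDistinctMersenneSum (2 ^ (M + 1) - 2 - i) ↔ i = M := by
  have := sum_Icc_two_pow_sub_one_add M
  refine ⟨fun h => ?_, ?_⟩
  · have := h.add_le (L := M) (by omega)
    omega
  · rintro rfl
    exact ⟨Icc 1 i, fun j hj => (mem_Icc.1 hj).1, by omega⟩

end MersenneSums

section P2

open Classical

theorem p2_eq_ite (n : ℕ) : p2 n = if IsDistinctMersenneSum n then 1 else 0 := rfl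

theorem p2_zero : p2 0 = 1 := by
  simp [p2_eq_ite, isDistinctMersenneSum_zero]

theorem p2_two_pow_sub_one_add {M n : ℕ} (hn : n < 2 ^ (M + 1) - 1) :
    p2 (2 ^ (M + 1) - 1 + n) = p2 n := by
  rw [p2_eq_ite, p2_eq_ite]
  exact if_congr (isDistinctMersenneSum_two_pow_sub_one_add_iff hn) rfl rfl

theorem p2_two_pow_sub_two (M : ℕ) : p2 (2 ^ (M + 2) - 2) = 0 := by
  simp [p2_eq_ite, not_isDistinctMersenneSum_two_pow_sub_two]

theorem p2_two_pow_sub_two_sub {M i : ℕ} (hi : i ≤ M) :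
    p2 (2 ^ (M + 1) - 2 - i) = if i = M then 1 else 0 := by
  rw [p2_eq_ite]
  exact if_congr (isDistinctMersenneSum_two_pow_sub_two_sub_iff hi) rfl rfl

end P2

section RightSpecialP2

theorem factorAt_p2_two_pow_sub_one_add {M k j : ℕ} (h : j + k ≤ 2 ^ (M + 1) - 1) :
    factorAt p2 k (2 ^ (M + 1) - 1 + j) = factorAt p2 k j :=
  funext fun i => by
    simp only [factorAt, add_assoc]
    exact p2_two_pow_sub_one_add (by omega)

theorem isRightSpecial_p2_factorAt {k M : ℕ} (hk : k ≤ 2 ^ (M + 1) - 1) :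
    IsRightSpecial p2 (factorAt p2 k (2 ^ (M + 1) - 1 - k)) := by
  refine ⟨_, 2 ^ (M + 1) - 1 + (2 ^ (M + 1) - 1 - k), rfl,
    factorAt_p2_two_pow_sub_one_add (by omega), ?_⟩
  have hpow : 2 ^ (M + 2) = 2 * 2 ^ (M + 1) := pow_succ' 2 (M + 1)
  have hpos : 1 < 2 ^ (M + 1) := Nat.one_lt_two_pow (Nat.succ_ne_zero M)
  rw [show 2 ^ (M + 1) - 1 - k + k = 2 ^ (M + 1) - 1 + 0 by omega,
    show 2 ^ (M + 1) - 1 + (2 ^ (M + 1) - 1 - k) + k = 2 ^ (M + 2) - 2 by omega,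
    p2_two_pow_sub_one_add (by omega), p2_zero, p2_two_pow_sub_two]
  decide

theorem factorAt_p2_apply {k M M' : ℕ} (hk : k ≤ 2 ^ (M' + 1) - 1) (hMk : M < k)
    (hMM' : M ≤ M') :
    factorAt p2 k (2 ^ (M' + 1) - 1 - k) ⟨k - 1 - M, by omega⟩ = if M = M' then 1 else 0 := by
  simp only [factorAt]
  rw [show 2 ^ (M' + 1) - 1 - k + (k - 1 - M) = 2 ^ (M' + 1) - 2 - M by omega,
    p2_two_pow_sub_two_sub hMM', eq_comm]

theorem injOn_factorAt_p2 {k L : ℕ} (hL : k < 2 ^ (L + 1)) :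
    Set.InjOn (fun M => factorAt p2 k (2 ^ (M + 1) - 1 - k)) (Set.Icc L k) := by
  have hbound : ∀ M ∈ Set.Icc L k, k ≤ 2 ^ (M + 1) - 1 := fun M hM => by
    have := Nat.pow_le_pow_right two_pos (Nat.succ_le_succ hM.1)
    omega
  have hne : ∀ M ∈ Set.Icc L k, ∀ M' ∈ Set.Icc L k, M < M' →
      factorAt p2 k (2 ^ (M + 1) - 1 - k) ≠ factorAt p2 k (2 ^ (M' + 1) - 1 - k) := by
    intro M hM M' hM' hlt heq
    have h := factorAt_p2_apply (hbound M' hM') (hlt.trans_le hM'.2) hlt.le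
    rw [← heq, factorAt_p2_apply (hbound M hM) (hlt.trans_le hM'.2) le_rfl] at h
    simp [hlt.ne] at h
  intro M hM M' hM' heq
  by_contra hMM'
  rcases Nat.lt_or_gt_of_ne hMM' with hlt | hlt
  exacts [hne M hM M' hM' hlt heq, hne M' hM' M hM hlt heq.symm]

theorem le_ncard_rightSpecial_p2 (k : ℕ) :
    k + 1 - Nat.log 2 k ≤ {w : Fin k → Fin 2 | IsRightSpecial p2 w}.ncard := by
  have hk := Nat.lt_pow_succ_log_self one_lt_two k
  rw [← Set.ncard_Icc_nat]
  refine Set.ncard_le_ncard_of_injOn _ (fun M hM => isRightSpecial_p2_factorAt ?_)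
    (injOn_factorAt_p2 hk) (Set.toFinite _)
  have := Nat.pow_le_pow_right two_pos (Nat.succ_le_succ hM.1)
  omega

end RightSpecialP2

theorem two_mul_sum_range_add_one_tsub (g m : ℕ) :
    2 * ∑ k ∈ range m, (k + 1 - g) = (m - g) * (m - g + 1) := by
  induction m with
  | zero => simp
  | succ m ih =>
    rw [sum_range_succ, mul_add, ih]
    rcases le_or_gt g m with h | h
    · rw [show m + 1 - g = m - g + 1 by omega]
      ring
    · rw [show m + 1 - g = 0 by omega, show m - g = 0 by omega]

theorem tsub_log_mul_le_two_mul_subwordComplexity_p2 (m : ℕ) :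
    (m - Nat.log 2 m) * (m - Nat.log 2 m + 1) ≤ 2 * subwordComplexity p2 m := by
  have hp2 := one_add_sum_ncard_rightSpecial_le (a := p2) m
  have hsum : ∑ k ∈ range m, (k + 1 - Nat.log 2 m) ≤
      ∑ k ∈ range m, {w : Fin k → Fin 2 | IsRightSpecial p2 w}.ncard :=
    sum_le_sum fun k hk => (Nat.sub_le_sub_left (Nat.log_mono_right (mem_range.1 hk).le) _).trans
      (le_ncard_rightSpecial_p2 k)
  rw [← two_mul_sum_range_add_one_tsub]
  omega

theorem logb_two_lt_natLog_add_one (m : ℕ) : Real.logb 2 m < Nat.log 2 m + 1 := by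
  have hfloor := Real.natFloor_logb_natCast 2 m
  rw [Nat.cast_ofNat] at hfloor
  exact hfloor ▸ Nat.lt_floor_add_one (Real.logb 2 m)

theorem complexity_p2_lower_bound_general (m : ℕ) :
    ((m : ℝ) - Real.logb 2 m) * ((m : ℝ) - Real.logb 2 m + 1) / 2 ≤
      (subwordComplexity p2 m : ℝ) := by
  set g := Nat.log 2 m
  have hgm : g ≤ m := Nat.log_le_self 2 m
  have hcount : ((m : ℝ) - g) * ((m : ℝ) - g + 1) ≤ 2 * subwordComplexity p2 m := by
    rw [← Nat.cast_sub hgm]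
    exact_mod_cast tsub_log_mul_le_two_mul_subwordComplexity_p2 m
  have hg : (g : ℝ) ≤ Real.logb 2 m := Real.natLog_le_logb m 2
  have hg' : Real.logb 2 m < g + 1 := logb_two_lt_natLog_add_one m
  have hgmR : (g : ℝ) ≤ m := by exact_mod_cast hgm
  -- for `x = m - logb 2 m` and `y = m - g`: `y (y + 1) - x (x + 1) = (y - x) (x + y + 1)`
  have hsum : (0 : ℝ) ≤ 2 * (m : ℝ) - g - Real.logb 2 m + 1 := by linarith
  nlinarith [mul_nonneg (sub_nonneg.2 hg) hsum]

/-- Lower bound for the subword complexity of `𝔭₂`: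
`p(𝔭₂, m) ≥ (m − log₂ m)(m − log₂ m + 1)/2`. -/
theorem complexity_p2_lower_bound (m : ℕ) (hm : 1 ≤ m) :
    ((m : ℝ) - Real.logb 2 m) * ((m : ℝ) - Real.logb 2 m + 1) / 2 ≤
      (subwordComplexity p2 m : ℝ) :=
  complexity_p2_lower_bound_general m
end

section
/- Let q ≥ 3 and let F be a finite field with q elements. Let a : ℕ → F be a sequence such that: (i) whenever a finite set J of positive integers satisfies n = ∑_{j ∈ J}(q^j − 1), then a n = (−1)^(card J) in F; and (ii) a n = 0 whenever no such set exists (in particular a 0 = 1, via J = ∅). Then the subword complexity of a is linear: there exist real constants c₁, c₂ > 0 and an integer m₀ such that for every m ≥ m₀ one has c₁ · m ≤ p(a, m) ≤ c₂ · m. (Equivalently, p(1/Π_q, m) = Θ(m) for q ≥ 3.) -/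
/-! Write `n = ∑_{j ∈ J} (q^j - 1)` and split `J` at a scale `L` with `q^L ≍ m`. Since
`q ≥ 3`, the exponents below `L` contribute less than `q^L / 2`, while two distinct sets of
exponents `≥ L` have sums at least `q^L - 1` apart. Hence all nonzero entries of a factor of
length `m` share the same high part `A`, and the factor is `(-1)^|A|` times a factor of the
sequence `a` delayed by `m`, starting at one of fewer than `q^L` positions: there are `O(m)`
factors. Conversely `a (q^L - 1) = -1` is preceded by `m - 1` zeros, so the `m` factors of
length `m` covering position `q^L - 1` are pairwise distinct. -/

open Finset

theorem le_subwordComplexity_of_isolated {A : Type*} [Zero A] [Finite A] {a : ℕ → A} {m N : ℕ}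
    (hmN : m ≤ N + 1) (hN : a N ≠ 0) (hgap : ∀ k, 0 < k → k < m → a (N - k) = 0) :
    m ≤ subwordComplexity a m := by
  set f : Fin m → Fin m → A := fun t i => a (N - t + i)
  have hne : ∀ t t' : Fin m, t < t' → f t ≠ f t' := by
    intro t t' htt' h
    have htt'' : (t : ℕ) < t' := htt'
    have h := congrFun h t
    simp only [f] at h
    rw [show N - t + t = N by omega, show N - t' + t = N - (t' - t) by omega,
      hgap _ (by omega) (by omega)] at h
    exact hN h
  have hinj : Function.Injective f := by
    intro t t' h
    rcases lt_trichotomy t t' with hlt | heq | hgt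
    exacts [absurd h (hne t t' hlt), heq, absurd h.symm (hne t' t hgt)]
  calc m = (Set.range f).ncard := by rw [Set.ncard_range_of_injective hinj, Nat.card_fin]
    _ ≤ subwordComplexity a m :=
      Set.ncard_le_ncard (by rintro _ ⟨t, rfl⟩; exact ⟨N - t, fun i => rfl⟩)

theorem subwordComplexity_le_card_mul_add_one {A : Type*} [Mul A] [Zero A] (a b : ℕ → A)
    {m P : ℕ} (U : Finset A)
    (h : ∀ j, (∀ i : Fin m, a (j + i) = 0) ∨
      ∃ u ∈ U, ∃ p < P, ∀ i : Fin m, a (j + i) = u * b (p + i)) :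
    subwordComplexity a m ≤ U.card * P + 1 := by
  classical
  let S : Finset (Fin m → A) := insert 0 ((U ×ˢ range P).image fun x i => x.1 * b (x.2 + i))
  have hsub : {w : Fin m → A | ∃ j : ℕ, ∀ i : Fin m, w i = a (j + i)} ⊆ S := by
    rintro w ⟨j, hw⟩
    rcases h j with hzero | ⟨u, hu, p, hp, hup⟩
    · exact mem_insert.2 (Or.inl (funext fun i => (hw i).trans (hzero i)))
    · exact mem_insert_of_mem (mem_image.2 ⟨(u, p), mem_product.2 ⟨hu, mem_range.2 hp⟩,
        funext fun i => ((hw i).trans (hup i)).symm⟩)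
  calc subwordComplexity a m ≤ S.card :=
        (Set.ncard_le_ncard hsub S.finite_toSet).trans_eq (Set.ncard_coe_finset S)
    _ ≤ (U ×ˢ range P).card + 1 :=
        (card_insert_le _ _).trans (Nat.add_le_add_right card_image_le 1)
    _ = U.card * P + 1 := by rw [card_product, card_range]

theorem sub_one_mul_sum_Ico_pow_add_pow {q L M : ℕ} (hq : 1 ≤ q) (hLM : L ≤ M) :
    (q - 1) * ∑ j ∈ Ico L M, q ^ j + q ^ L = q ^ M := by
  induction M, hLM using Nat.le_induction with
  | base => simp
  | succ M hLM ih =>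
    obtain ⟨r, rfl⟩ : ∃ r, q = r + 1 := ⟨q - 1, by omega⟩
    simp only [Nat.add_sub_cancel] at ih ⊢
    rw [sum_Ico_succ_top hLM, pow_succ, ← ih]
    ring

def carlitzSum (q : ℕ) (J : Finset ℕ) : ℕ := ∑ j ∈ J, (q ^ j - 1)

section carlitzSum

variable {q L : ℕ} {A A' J : Finset ℕ}

theorem pow_sub_one_le_carlitzSum {j : ℕ} (hj : j ∈ J) : q ^ j - 1 ≤ carlitzSum q J :=
  single_le_sum (f := fun j => q ^ j - 1) (fun _ _ => Nat.zero_le _) hj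

theorem carlitzSum_le_sum_pow (q : ℕ) (J : Finset ℕ) : carlitzSum q J ≤ ∑ j ∈ J, q ^ j :=
  sum_le_sum fun _ _ => Nat.sub_le _ _

theorem carlitzSum_filter_add_filter (q L : ℕ) (J : Finset ℕ) :
    carlitzSum q (J.filter (L ≤ ·)) + carlitzSum q (J.filter (¬ L ≤ ·)) = carlitzSum q J :=
  sum_filter_add_sum_filter_not J _ _

theorem carlitzSum_union (h : Disjoint A A') :
    carlitzSum q (A ∪ A') = carlitzSum q A + carlitzSum q A' :=
  sum_union h

theorem carlitzSum_add_pow_le {M : ℕ} (hq : 2 ≤ q) (hA' : ∀ j ∈ A', L ≤ j) (hLM : L ≤ M)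
    (hM : M ∈ A \ A') (hmax : ∀ j ∈ symmDiff A A', j ≤ M) :
    carlitzSum q A' + q ^ L ≤ carlitzSum q A + 1 := by
  have hsub : A' \ A ⊆ Ico L M := fun j hj => by
    have hjM : j ≠ M := by rintro rfl; exact (mem_sdiff.1 hj).2 (mem_sdiff.1 hM).1
    exact mem_Ico.2 ⟨hA' j (mem_sdiff.1 hj).1,
      (hmax j (mem_symmDiff.2 (Or.inr (mem_sdiff.1 hj)))).lt_of_ne hjM⟩
  have hA := sum_inter_add_sum_sdiff A A' fun j => q ^ j - 1
  have hA'' := sum_inter_add_sum_sdiff A' A fun j => q ^ j - 1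
  rw [inter_comm] at hA''
  have hdiff : q ^ M - 1 ≤ carlitzSum q (A \ A') := pow_sub_one_le_carlitzSum hM
  have hdiff' : carlitzSum q (A' \ A) ≤ ∑ j ∈ Ico L M, q ^ j :=
    (carlitzSum_le_sum_pow q _).trans (sum_le_sum_of_subset hsub)
  have hgeom := sub_one_mul_sum_Ico_pow_add_pow (by omega : 1 ≤ q) hLM
  have hgeom' := Nat.le_mul_of_pos_left (∑ j ∈ Ico L M, q ^ j) (by omega : 0 < q - 1)
  unfold carlitzSum at *
  omega

theorem carlitzSum_add_pow_le_or_of_ne (hq : 2 ≤ q) (hA : ∀ j ∈ A, L ≤ j)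
    (hA' : ∀ j ∈ A', L ≤ j) (hne : A ≠ A') :
    carlitzSum q A' + q ^ L ≤ carlitzSum q A + 1 ∨
      carlitzSum q A + q ^ L ≤ carlitzSum q A' + 1 := by
  obtain ⟨M, hM, hmax⟩ := exists_max_image (symmDiff A A') id (symmDiff_nonempty.2 hne)
  rcases mem_symmDiff.1 hM with hMA | hMA'
  · exact Or.inl (carlitzSum_add_pow_le hq hA' (hA M hMA.1) (mem_sdiff.2 hMA) hmax)
  · refine Or.inr (carlitzSum_add_pow_le hq hA (hA' M hMA'.1) (mem_sdiff.2 hMA') ?_)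
    rwa [symmDiff_comm]

theorem two_mul_carlitzSum_lt (hq : 3 ≤ q) (hJ : ∀ j ∈ J, j < L) :
    2 * carlitzSum q J < q ^ L := by
  have hgeom := sub_one_mul_sum_Ico_pow_add_pow (by omega : 1 ≤ q) (Nat.zero_le L)
  have hJ' : carlitzSum q J ≤ ∑ j ∈ Ico 0 L, q ^ j :=
    (carlitzSum_le_sum_pow q J).trans
      (sum_le_sum_of_subset fun j hj => mem_Ico.2 ⟨Nat.zero_le j, hJ j hj⟩)
  have htwo := Nat.mul_le_mul_right (∑ j ∈ Ico 0 L, q ^ j) (by omega : 2 ≤ q - 1)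
  rw [pow_zero] at hgeom
  omega

theorem lt_of_mem_of_carlitzSum_lt (hq : 2 ≤ q) (h : carlitzSum q J < q ^ L - 1) :
    ∀ j ∈ J, j < L := fun j hj =>
  (pow_lt_pow_iff_right₀ (by omega : 1 < q)).1
    (by have := pow_sub_one_le_carlitzSum (q := q) hj; omega)

theorem eq_of_carlitzSum_add_eq {m n s : ℕ} (hq : 2 ≤ q) (hmL : 2 * m + 2 ≤ q ^ L)
    (hA : ∀ j ∈ A, L ≤ j) (hA' : ∀ j ∈ A', L ≤ j) (hs : 2 * s < q ^ L)
    (hlo : carlitzSum q A < n + m) (hhi : 2 * n < 2 * carlitzSum q A + q ^ L + 2 * m)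
    (hn : carlitzSum q A' + s = n) : A' = A := by
  by_contra hne
  rcases carlitzSum_add_pow_le_or_of_ne hq hA hA' (Ne.symm hne) with h | h <;> omega

end carlitzSum

structure IsCarlitzCoeffSeq {R : Type*} [Ring R] (q : ℕ) (a : ℕ → R) : Prop where
  apply_carlitzSum :
    ∀ J : Finset ℕ, (∀ j ∈ J, 1 ≤ j) → a (carlitzSum q J) = (-1) ^ J.card
  eq_zero : ∀ n, (∀ J : Finset ℕ, (∀ j ∈ J, 1 ≤ j) → carlitzSum q J ≠ n) → a n = 0

namespace IsCarlitzCoeffSeq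

variable {R : Type*} [Ring R] {q L m : ℕ} {a : ℕ → R}

theorem exists_carlitzSum_eq (ha : IsCarlitzCoeffSeq q a) {n : ℕ} (h : a n ≠ 0) :
    ∃ J : Finset ℕ, (∀ j ∈ J, 1 ≤ j) ∧ carlitzSum q J = n := by
  by_contra! hn
  exact h (ha.eq_zero n hn)

theorem apply_eq_neg_one_pow_mul (ha : IsCarlitzCoeffSeq q a) (hq : 3 ≤ q)
    (hmL : 2 * m + 2 ≤ q ^ L) {A : Finset ℕ} (hA : ∀ j ∈ A, L ≤ j) {n : ℕ}
    (hlo : carlitzSum q A < n + m) (hhi : 2 * n < 2 * carlitzSum q A + q ^ L + 2 * m) :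
    a n = (-1) ^ A.card * if carlitzSum q A ≤ n then a (n - carlitzSum q A) else 0 := by
  have hL : 1 ≤ L := Nat.one_le_iff_ne_zero.2 (by rintro rfl; simp at hmL)
  by_cases hn : ∃ J : Finset ℕ, (∀ j ∈ J, 1 ≤ j) ∧ carlitzSum q J = n
  · obtain ⟨J, hJ1, rfl⟩ := hn
    have hsplit := carlitzSum_filter_add_filter q L J
    have hJA : J.filter (L ≤ ·) = A :=
      eq_of_carlitzSum_add_eq (by omega) hmL hA (fun j hj => (mem_filter.1 hj).2)
        (two_mul_carlitzSum_lt hq fun j hj => not_le.1 (mem_filter.1 hj).2) hlo hhi hsplit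
    rw [hJA] at hsplit
    rw [if_pos (by omega), Nat.sub_eq_of_eq_add' hsplit.symm, ha.apply_carlitzSum J hJ1,
      ha.apply_carlitzSum _ fun j hj => hJ1 j (mem_filter.1 hj).1,
      ← pow_add, ← hJA, card_filter_add_card_filter_not]
  · rw [ha.eq_zero n fun J hJ1 hJ => hn ⟨J, hJ1, hJ⟩]
    split_ifs with hAn
    · suffices a (n - carlitzSum q A) = 0 by rw [this, mul_zero]
      refine ha.eq_zero _ fun B hB1 hB => hn ⟨A ∪ B, fun j hj => ?_, ?_⟩
      · rcases mem_union.1 hj with hjA | hjB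
        exacts [hL.trans (hA j hjA), hB1 j hjB]
      · have hBL : ∀ j ∈ B, j < L := lt_of_mem_of_carlitzSum_lt (q := q) (by omega) (by omega)
        have hdisj : Disjoint A B :=
          disjoint_left.2 fun j hjA hjB => (hA j hjA).not_gt (hBL j hjB)
        rw [carlitzSum_union hdisj]
        omega
    · rw [mul_zero]

-- The factor is compared with `a` preceded by `m` zeros, so that the shift `p` is a natural.
theorem exists_factor_eq_mul_delay [DecidableEq R] (ha : IsCarlitzCoeffSeq q a) (hq : 3 ≤ q)
    (hmL : 2 * m + 2 ≤ q ^ L) (j₀ : ℕ) (i₀ : Fin m) (h : a (j₀ + i₀) ≠ 0) :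
    ∃ u ∈ ({1, -1} : Finset R), ∃ p < q ^ L,
      ∀ i : Fin m, a (j₀ + i) = u * if m ≤ p + i then a (p + i - m) else 0 := by
  obtain ⟨J, -, hJ⟩ := ha.exists_carlitzSum_eq h
  have hsplit := carlitzSum_filter_add_filter q L J
  have hlow := two_mul_carlitzSum_lt hq (J := J.filter (¬ L ≤ ·)) (L := L)
    fun j hj => not_le.1 (mem_filter.1 hj).2
  set A := J.filter (L ≤ ·)
  have hi₀ := i₀.isLt
  refine ⟨(-1) ^ A.card, by simpa using neg_one_pow_eq_or R A.card, j₀ + m - carlitzSum q A,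
    by omega, fun i => ?_⟩
  have hi := i.isLt
  rw [ha.apply_eq_neg_one_pow_mul hq hmL (A := A) (fun j hj => (mem_filter.1 hj).2) (by omega)
    (by omega)]
  by_cases hAi : carlitzSum q A ≤ j₀ + i
  · rw [if_pos hAi, if_pos (by omega)]
    congr 2
    omega
  · rw [if_neg hAi, if_neg (by omega)]

theorem subwordComplexity_le (ha : IsCarlitzCoeffSeq q a) (hq : 3 ≤ q)
    (hmL : 2 * m + 2 ≤ q ^ L) : subwordComplexity a m ≤ 2 * q ^ L + 1 := by
  classical
  refine (subwordComplexity_le_card_mul_add_one a (fun k => if m ≤ k then a (k - m) else 0)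
    (P := q ^ L) {1, -1} fun j => ?_).trans ?_
  · by_cases h : ∃ i₀ : Fin m, a (j + i₀) ≠ 0
    · obtain ⟨i₀, hi₀⟩ := h
      exact Or.inr (ha.exists_factor_eq_mul_delay hq hmL j i₀ hi₀)
    · push Not at h
      exact Or.inl h
  · gcongr
    exact (card_insert_le _ _).trans_eq (by rw [card_singleton])

theorem le_subwordComplexity [Finite R] [Nontrivial R] (ha : IsCarlitzCoeffSeq q a) (hq : 3 ≤ q)
    (hmL : 2 * m + 2 ≤ q ^ L) : m ≤ subwordComplexity a m := by
  have hL : 1 ≤ L := Nat.one_le_iff_ne_zero.2 (by rintro rfl; simp at hmL)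
  refine le_subwordComplexity_of_isolated (N := q ^ L - 1) (by omega) ?_
    fun k hk hkm => ha.eq_zero _ fun J _ hJ => ?_
  · have h := ha.apply_carlitzSum {L} (by simpa using hL)
    rw [carlitzSum, sum_singleton, card_singleton, pow_one] at h
    rw [h]
    exact neg_ne_zero.2 one_ne_zero
  · have hJL : ∀ j ∈ J, j < L := lt_of_mem_of_carlitzSum_lt (q := q) (by omega) (by omega)
    have := two_mul_carlitzSum_lt hq hJL
    omega

end IsCarlitzCoeffSeq

theorem complexity_inv_carlitz_pi_q_theta_linear_general
    (q : ℕ) (hq : 3 ≤ q) (F : Type*) [Field F] [Fintype F]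
    (a : ℕ → F)
    (h1 : ∀ (n : ℕ) (J : Finset ℕ), (∀ j ∈ J, 1 ≤ j) → n = ∑ j ∈ J, (q ^ j - 1) →
      a n = (-1 : F) ^ J.card)
    (h0 : ∀ n : ℕ, (¬ ∃ J : Finset ℕ, (∀ j ∈ J, 1 ≤ j) ∧ n = ∑ j ∈ J, (q ^ j - 1)) →
      a n = 0) :
    ∃ c₁ c₂ : ℝ, 0 < c₁ ∧ 0 < c₂ ∧ ∃ m₀ : ℕ, ∀ m : ℕ, m₀ ≤ m →
      c₁ * (m : ℝ) ≤ (subwordComplexity a m : ℝ) ∧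
      (subwordComplexity a m : ℝ) ≤ c₂ * (m : ℝ) := by
  have ha : IsCarlitzCoeffSeq q a :=
    ⟨fun J hJ => h1 _ J hJ rfl, fun n hn => h0 n fun ⟨J, hJ, hJn⟩ => hn J hJ hJn.symm⟩
  refine ⟨1, 8 * q + 1, one_pos, by positivity, 1, fun m hm => ?_⟩
  -- `q ^ L` is the least power of `q` exceeding `2 * m + 2`
  set L := Nat.log q (2 * m + 2) + 1
  have hmL : 2 * m + 2 ≤ q ^ L := (Nat.lt_pow_succ_log_self (by omega) _).le
  have hLm : q ^ L ≤ q * (2 * m + 2) := by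
    rw [pow_succ']
    exact Nat.mul_le_mul_left q (Nat.pow_log_le_self q (by omega))
  have hlow := ha.le_subwordComplexity hq hmL
  have hup : subwordComplexity a m ≤ (8 * q + 1) * m := by
    nlinarith [ha.subwordComplexity_le hq hmL]
  constructor
  · rw [one_mul]
    exact_mod_cast hlow
  · exact_mod_cast hup

/-- For `q ≥ 3`, the coefficient sequence of `1/Π_q` has linear subword
complexity `Θ(m)`. -/
theorem complexity_inv_carlitz_pi_q_theta_linear
    (q : ℕ) (hq : 3 ≤ q) (F : Type*) [Field F] [Fintype F] (hcard : Fintype.card F = q)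
    (a : ℕ → F)
    (h1 : ∀ (n : ℕ) (J : Finset ℕ), (∀ j ∈ J, 1 ≤ j) → n = ∑ j ∈ J, (q ^ j - 1) →
      a n = (-1 : F) ^ J.card)
    (h0 : ∀ n : ℕ, (¬ ∃ J : Finset ℕ, (∀ j ∈ J, 1 ≤ j) ∧ n = ∑ j ∈ J, (q ^ j - 1)) →
      a n = 0) :
    ∃ c₁ c₂ : ℝ, 0 < c₁ ∧ 0 < c₂ ∧ ∃ m₀ : ℕ, ∀ m : ℕ, m₀ ≤ m →
      c₁ * (m : ℝ) ≤ (subwordComplexity a m : ℝ) ∧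
      (subwordComplexity a m : ℝ) ≤ c₂ * (m : ℝ) :=
  complexity_inv_carlitz_pi_q_theta_linear_general q hq F a h1 h0
end

section
/- Let q ≥ 3 and let F be a finite field with q elements. Let a : ℕ → F be a sequence such that: (i) whenever a finite set J of positive integers satisfies n = ∑_{j ∈ J}(q^j − 1), then a n = (−1)^(card J) in F; and (ii) a n = 0 whenever no such set exists. Then for every integer m ≥ 1 one has p(a, m) ≤ (2q + 4)·m + 2q − 3. -/
/-!
Write `u_K` for the prefix of `a` of length `q ^ K - 1`. A sum of distinct `q ^ j - 1` that
uses the exponent `K` exceeds every sum over smaller exponents and falls short of `q ^ (K + 1) - 1`,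
so `u_{K+1} = u_K (-u_K) 0 ⋯ 0`, and for `q ≥ 3` the zero block is longer than `q ^ K`.
Take `q ^ (k - 1) ≤ m < q ^ k`. Peeling off blocks shows that every factor of length `m` is, up to
sign, the factor at a position inside `u_k`, across the end of `-u_k` (the all-zero factor
included), or across the start of `-u_{k+1}`: at most `q ^ k + 2m - 2` positions, and `q ^ k ≤ qm`.
-/

namespace InvCarlitzPi

def maxRepr (q K : ℕ) : ℕ := ∑ j ∈ Finset.Icc 1 K, (q ^ j - 1)

lemma maxRepr_succ (q K : ℕ) : maxRepr q (K + 1) = maxRepr q K + (q ^ (K + 1) - 1) := by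
  rw [maxRepr, maxRepr, Finset.sum_Icc_succ_top (by omega)]

lemma three_mul_pow_le_pow_succ {q : ℕ} (hq : 3 ≤ q) (K : ℕ) : 3 * q ^ K ≤ q ^ (K + 1) := by
  rw [pow_succ, mul_comm]
  exact Nat.mul_le_mul_left _ hq

lemma maxRepr_add_pow_lt {q : ℕ} (hq : 3 ≤ q) (K : ℕ) : maxRepr q K + q ^ K < q ^ (K + 1) := by
  induction K with
  | zero => simp [maxRepr]; omega
  | succ K ih =>
    have := three_mul_pow_le_pow_succ hq (K + 1)
    have := Nat.one_le_pow K q (by omega)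
    rw [maxRepr_succ]
    omega

lemma maxRepr_add_pow_pred_add_two_le {q K : ℕ} (hq : 3 ≤ q) (hK : 1 ≤ K) :
    maxRepr q K + q ^ (K - 1) + 2 ≤ 2 * q ^ K := by
  obtain ⟨K, rfl⟩ := Nat.exists_eq_add_of_le' hK
  have := maxRepr_add_pow_lt hq K
  have := Nat.one_le_pow K q (by omega)
  rw [maxRepr_succ, Nat.add_sub_cancel]
  omega

lemma sum_le_maxRepr (q : ℕ) {J : Finset ℕ} {K : ℕ} (hJ : ∀ j ∈ J, 1 ≤ j) (hK : ∀ j ∈ J, j ≤ K) :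
    ∑ j ∈ J, (q ^ j - 1) ≤ maxRepr q K :=
  Finset.sum_le_sum_of_subset fun j hj => Finset.mem_Icc.2 ⟨hJ j hj, hK j hj⟩

lemma forall_le_or_pow_sub_one_le_sum {q : ℕ} (hq : 1 ≤ q) (J : Finset ℕ) (K : ℕ) :
    (∀ j ∈ J, j ≤ K) ∨ q ^ (K + 1) - 1 ≤ ∑ j ∈ J, (q ^ j - 1) := by
  refine or_iff_not_imp_left.2 fun h => ?_
  push Not at h
  obtain ⟨j, hj, hKj⟩ := h
  calc q ^ (K + 1) - 1 ≤ q ^ j - 1 := Nat.sub_le_sub_right (Nat.pow_le_pow_right hq hKj) 1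
    _ ≤ ∑ j ∈ J, (q ^ j - 1) :=
      Finset.single_le_sum (f := fun j => q ^ j - 1) (fun _ _ => Nat.zero_le _) hj

lemma mem_of_pow_sub_one_add_eq_sum {q : ℕ} (hq : 3 ≤ q) {J : Finset ℕ} {k r : ℕ}
    (hJ : ∀ j ∈ J, 1 ≤ j) (hr : r + 2 ≤ q ^ k) (h : q ^ k - 1 + r = ∑ j ∈ J, (q ^ j - 1)) :
    k ∈ J := by
  have hk : k ≠ 0 := by rintro rfl; simp at hr
  rcases forall_le_or_pow_sub_one_le_sum (by omega : 1 ≤ q) J k with hle | hge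
  · by_contra hkJ
    have hsum := sum_le_maxRepr q hJ (K := k - 1) fun j hj =>
      Nat.le_sub_one_of_lt (lt_of_le_of_ne (hle j hj) (ne_of_mem_of_not_mem hj hkJ))
    have := maxRepr_add_pow_lt hq (k - 1)
    rw [Nat.sub_add_cancel (Nat.one_le_iff_ne_zero.2 hk)] at this
    have := Nat.one_le_pow (k - 1) q (by omega)
    omega
  · have := three_mul_pow_le_pow_succ hq k
    omega

section Coefficients

variable {R : Type*} [Ring R] {q : ℕ} {a : ℕ → R}

lemma apply_pow_sub_one_add (hq : 3 ≤ q)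
    (h1 : ∀ (n : ℕ) (J : Finset ℕ), (∀ j ∈ J, 1 ≤ j) → n = ∑ j ∈ J, (q ^ j - 1) →
      a n = (-1 : R) ^ J.card)
    (h0 : ∀ n : ℕ, (¬ ∃ J : Finset ℕ, (∀ j ∈ J, 1 ≤ j) ∧ n = ∑ j ∈ J, (q ^ j - 1)) →
      a n = 0)
    {k r : ℕ} (hr : r + 2 ≤ q ^ k) :
    a (q ^ k - 1 + r) = -a r := by
  by_cases hrepr : ∃ J : Finset ℕ, (∀ j ∈ J, 1 ≤ j) ∧ r = ∑ j ∈ J, (q ^ j - 1)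
  · obtain ⟨J, hJ, rfl⟩ := hrepr
    have hkJ : k ∉ J := fun hkJ => by
      have := Finset.single_le_sum (f := fun j => q ^ j - 1) (fun _ _ => Nat.zero_le _) hkJ
      omega
    have hk : 1 ≤ k := Nat.one_le_iff_ne_zero.2 fun hk => by simp [hk] at hr
    rw [h1 _ (insert k J) (by simpa [hk] using hJ) (Finset.sum_insert hkJ).symm,
      h1 _ J hJ rfl, Finset.card_insert_of_notMem hkJ, pow_succ, mul_neg_one]
  · rw [h0 r hrepr, h0, neg_zero]
    rintro ⟨J, hJ, hsum⟩
    have hkJ := mem_of_pow_sub_one_add_eq_sum hq hJ hr hsum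
    refine hrepr ⟨J.erase k, fun j hj => hJ j (Finset.mem_of_mem_erase hj), ?_⟩
    have := Finset.add_sum_erase J (fun j => q ^ j - 1) hkJ
    omega

lemma apply_eq_zero_of_maxRepr_lt (hq : 1 ≤ q)
    (h0 : ∀ n : ℕ, (¬ ∃ J : Finset ℕ, (∀ j ∈ J, 1 ≤ j) ∧ n = ∑ j ∈ J, (q ^ j - 1)) →
      a n = 0)
    {K n : ℕ} (hlt : maxRepr q K < n) (hn : n + 2 ≤ q ^ (K + 1)) : a n = 0 := by
  refine h0 n fun ⟨J, hJ, hsum⟩ => ?_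
  rcases forall_le_or_pow_sub_one_le_sum hq J K with hle | hge
  · have := sum_le_maxRepr q hJ hle
    omega
  · omega

end Coefficients

section Factors

variable {A : Type*}

def factor (a : ℕ → A) (m j : ℕ) : Fin m → A := fun i => a (j + i)

lemma subwordComplexity_eq_ncard_range (a : ℕ → A) (m : ℕ) :
    subwordComplexity a m = (Set.range (factor a m)).ncard := by
  unfold subwordComplexity
  congr 1
  ext w
  exact ⟨fun ⟨j, hj⟩ => ⟨j, funext fun i => (hj i).symm⟩,
    fun ⟨j, hj⟩ => ⟨j, fun i => by simp [← hj, factor]⟩⟩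

lemma subwordComplexity_le_two_mul_card [Neg A] (a : ℕ → A) (m : ℕ) (T : Finset ℕ)
    (hT : ∀ j, ∃ t ∈ T, factor a m j = factor a m t ∨ factor a m j = -factor a m t) :
    subwordComplexity a m ≤ 2 * T.card := by
  classical
  have hsub : Set.range (factor a m) ⊆
      ↑(T.image (factor a m) ∪ T.image (fun t => -factor a m t)) := by
    rintro _ ⟨j, rfl⟩
    obtain ⟨t, ht, h | h⟩ := hT j <;> simp only [Finset.coe_union, Finset.coe_image]
    · exact .inl ⟨t, ht, h.symm⟩
    · exact .inr ⟨t, ht, h.symm⟩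
  calc subwordComplexity a m
      ≤ (T.image (factor a m) ∪ T.image (fun t => -factor a m t)).card := by
        rw [subwordComplexity_eq_ncard_range, ← Set.ncard_coe_finset]
        exact Set.ncard_le_ncard hsub (Finset.finite_toSet _)
    _ ≤ T.card + T.card := (Finset.card_union_le _ _).trans
        (add_le_add Finset.card_image_le Finset.card_image_le)
    _ = 2 * T.card := (two_mul _).symm

end Factors

-- `u_{K+1} = u_K (-u_K) 0 ⋯ 0`; more precisely, `u_{K+1}` vanishes after position `maxRepr q K`.
structure BlockRecursion {A : Type*} [Zero A] [Neg A] (q : ℕ) (a : ℕ → A) : Prop where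
  neg_shift : ∀ K r, r + 2 ≤ q ^ K → a (q ^ K - 1 + r) = -a r
  eq_zero : ∀ K n, maxRepr q K < n → n + 2 ≤ q ^ (K + 1) → a n = 0

-- Positions inside `u_k`, across the end of `-u_k`, and across the start of `-u_{k+1}`.
def anchors (q k m : ℕ) : Finset ℕ :=
  Finset.range (q ^ k - 1) ∪ Finset.Ioc (2 * q ^ k - 2 - m) (2 * q ^ k - 2) ∪
    Finset.Ico (q ^ (k + 1) - m) (q ^ (k + 1) - 1)

lemma card_anchors_le (q k m : ℕ) : (anchors q k m).card ≤ q ^ k - 1 + m + (m - 1) := by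
  refine (Finset.card_union_le _ _).trans (add_le_add ((Finset.card_union_le _ _).trans ?_) ?_)
  · rw [Finset.card_range, Nat.card_Ioc]
    omega
  · rw [Nat.card_Ico]
    omega

namespace BlockRecursion

variable {A : Type*} [Zero A] [InvolutiveNeg A] {q : ℕ} {a : ℕ → A}

lemma factor_pow_sub_one_add (ha : BlockRecursion q a) {m K r : ℕ} (h : r + m + 1 ≤ q ^ K) :
    factor a m (q ^ K - 1 + r) = -factor a m r :=
  funext fun i => by
    simp only [factor, Pi.neg_apply, add_assoc]
    exact ha.neg_shift K _ (by omega)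

lemma factor_eq_zero (ha : BlockRecursion q a) {m K n : ℕ} (hlt : maxRepr q K < n)
    (hn : n + m + 1 ≤ q ^ (K + 1)) : factor a m n = 0 :=
  funext fun i => ha.eq_zero K _ (by omega) (by omega)

lemma factor_pow_succ_sub_one_sub (ha : BlockRecursion q a) {m K s : ℕ}
    (hs : maxRepr q K + s + 1 < q ^ (K + 1)) (hm : m + 1 ≤ q ^ (K + 1)) :
    factor a m (q ^ (K + 1) - 1 - s) = fun i : Fin m => if (i : ℕ) < s then 0 else -a (i - s) := by
  funext i
  simp only [factor]
  split_ifs with hi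
  · exact ha.eq_zero K _ (by omega) (by omega)
  · rw [show q ^ (K + 1) - 1 - s + i = q ^ (K + 1) - 1 + (i - s) by omega]
    exact ha.neg_shift _ _ (by omega)

lemma exists_anchor_of_maxRepr_lt (ha : BlockRecursion q a) (hq : 3 ≤ q) {k m K j : ℕ}
    (hk : 1 ≤ k) (hm0 : 1 ≤ m) (hm : m + 1 ≤ q ^ k) (hkK : k ≤ K) (hlt : maxRepr q K < j)
    (hj : j + 1 < q ^ (K + 1)) :
    ∃ t ∈ anchors q k m, factor a m j = factor a m t := by
  have hqkK : q ^ k ≤ q ^ K := Nat.pow_le_pow_right (by omega) hkK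
  have hMK := maxRepr_add_pow_lt hq K
  have hMk := maxRepr_add_pow_lt hq k
  have hk3 := three_mul_pow_le_pow_succ hq k
  by_cases hend : j + m + 1 ≤ q ^ (K + 1)
  · have hMk' := maxRepr_add_pow_pred_add_two_le hq hk
    have := Nat.one_le_pow (k - 1) q (by omega)
    refine ⟨2 * q ^ k - 2, by simp [anchors]; omega, ?_⟩
    rw [ha.factor_eq_zero hlt hend, ha.factor_eq_zero (K := k) (by omega) (by omega)]
  · set s := q ^ (K + 1) - 1 - j
    refine ⟨q ^ (k + 1) - 1 - s, by simp [anchors]; omega, ?_⟩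
    rw [show j = q ^ (K + 1) - 1 - s by omega,
      ha.factor_pow_succ_sub_one_sub (K := K) (by omega) (by omega),
      ha.factor_pow_succ_sub_one_sub (K := k) (by omega) (by omega)]

lemma exists_anchor (ha : BlockRecursion q a) (hq : 3 ≤ q) {k m : ℕ} (hk : 1 ≤ k)
    (hm0 : 1 ≤ m) (hm : m + 1 ≤ q ^ k) (j : ℕ) :
    ∃ t ∈ anchors q k m, factor a m j = factor a m t ∨ factor a m j = -factor a m t := by
  induction j using Nat.strong_induction_on with
  | _ j ih =>
  by_cases hjk : j + 1 < q ^ k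
  · exact ⟨j, by simp [anchors]; omega, .inl rfl⟩
  have hq1 : 1 < q := by omega
  set K := Nat.log q (j + 1)
  have hKj : q ^ K ≤ j + 1 := Nat.pow_log_le_self q (by omega)
  have hjK : j + 1 < q ^ (K + 1) := Nat.lt_pow_succ_log_self hq1 _
  have hkK : k ≤ K := Nat.le_log_of_pow_le hq1 (by omega)
  have hqkK : q ^ k ≤ q ^ K := Nat.pow_le_pow_right (by omega) hkK
  -- `q ^ K - 1 ≤ j < q ^ (K + 1) - 1`: the factor starts in `-u_K` or in the zeros of `u_{K+1}`.
  by_cases hflip : j + m + 2 ≤ 2 * q ^ K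
  · obtain ⟨t, ht, h⟩ := ih (j + 1 - q ^ K) (by omega)
    have hj : factor a m j = -factor a m (j + 1 - q ^ K) := by
      rw [← ha.factor_pow_sub_one_add (K := K) (by omega)]
      congr 1
      omega
    refine ⟨t, ht, ?_⟩
    rcases h with h | h
    · exact .inr (hj.trans (congrArg Neg.neg h))
    · exact .inl (by rw [hj, h, neg_neg])
  by_cases hmid : K = k ∧ j ≤ 2 * q ^ k - 2
  · exact ⟨j, by simp [anchors]; omega, .inl rfl⟩
  have hlt : maxRepr q K < j := by
    have := maxRepr_add_pow_pred_add_two_le hq (hk.trans hkK)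
    rcases hkK.eq_or_lt with rfl | hkK'
    · omega
    · have := Nat.pow_le_pow_right (by omega : 1 ≤ q) (Nat.le_sub_one_of_lt hkK') (n := q)
      omega
  obtain ⟨t, ht, h⟩ := ha.exists_anchor_of_maxRepr_lt hq hk hm0 hm hkK hlt hjK
  exact ⟨t, ht, .inl h⟩

end BlockRecursion

end InvCarlitzPi

open InvCarlitzPi in
theorem complexity_inv_carlitz_pi_q_upper_bound_general
    (q : ℕ) (hq : 3 ≤ q) (F : Type*) [Field F]
    (a : ℕ → F)
    (h1 : ∀ (n : ℕ) (J : Finset ℕ), (∀ j ∈ J, 1 ≤ j) → n = ∑ j ∈ J, (q ^ j - 1) →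
      a n = (-1 : F) ^ J.card)
    (h0 : ∀ n : ℕ, (¬ ∃ J : Finset ℕ, (∀ j ∈ J, 1 ≤ j) ∧ n = ∑ j ∈ J, (q ^ j - 1)) →
      a n = 0)
    (m : ℕ) (hm : 1 ≤ m) :
    subwordComplexity a m ≤ (2 * q + 4) * m + 2 * q - 3 := by
  have ha : BlockRecursion q a :=
    ⟨fun _ _ hr => apply_pow_sub_one_add hq h1 h0 hr,
      fun _ _ hlt hn => apply_eq_zero_of_maxRepr_lt (by omega) h0 hlt hn⟩
  set k := Nat.log q m + 1
  have hmk : m + 1 ≤ q ^ k := Nat.lt_pow_succ_log_self (by omega) m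
  have hkm : q ^ k ≤ q * m := by
    rw [pow_succ, mul_comm]
    exact Nat.mul_le_mul_left q (Nat.pow_log_le_self q (by omega))
  calc subwordComplexity a m
      ≤ 2 * (anchors q k m).card :=
        subwordComplexity_le_two_mul_card a m _ (ha.exists_anchor hq (by omega) hm hmk)
    _ ≤ 2 * (q ^ k - 1 + m + (m - 1)) := Nat.mul_le_mul_left 2 (card_anchors_le q k m)
    _ ≤ (2 * q + 4) * m + 2 * q - 3 := by
        rw [add_mul, mul_assoc]
        omega

/-- For `q ≥ 3`, the coefficient sequence of `1/Π_q` satisfies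
`p(a, m) ≤ (2q + 4)m + 2q − 3` for every `m ≥ 1`. -/
theorem complexity_inv_carlitz_pi_q_upper_bound
    (q : ℕ) (hq : 3 ≤ q) (F : Type*) [Field F] [Fintype F] (hcard : Fintype.card F = q)
    (a : ℕ → F)
    (h1 : ∀ (n : ℕ) (J : Finset ℕ), (∀ j ∈ J, 1 ≤ j) → n = ∑ j ∈ J, (q ^ j - 1) →
      a n = (-1 : F) ^ J.card)
    (h0 : ∀ n : ℕ, (¬ ∃ J : Finset ℕ, (∀ j ∈ J, 1 ≤ j) ∧ n = ∑ j ∈ J, (q ^ j - 1)) →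
      a n = 0)
    (m : ℕ) (hm : 1 ≤ m) :
    subwordComplexity a m ≤ (2 * q + 4) * m + 2 * q - 3 :=
  complexity_inv_carlitz_pi_q_upper_bound_general q hq F a h1 h0 m hm
end

section
/- The class 𝒫 of Laurent series of at most polynomial complexity is a vector space over F(T): let F be a finite field, f, g : LaurentSeries F, and suppose there exist naturals K, L and reals C₁, C₂ > 0 with p(f, m) ≤ C₁ · m^K and p(g, m) ≤ C₂ · m^L for all m ≥ 1. Then for all rational functions r, s : RatFunc F there exist a natural N and a real C > 0 such that p((algebraMap (RatFunc F) (LaurentSeries F) r) * f + (algebraMap (RatFunc F) (LaurentSeries F) s) * g, m) ≤ C · m^N for all m ≥ 1. -/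
/-- The complexity of a Laurent series `f ∈ F((T⁻¹))`: the subword complexity of its
coefficient sequence. -/
noncomputable def laurentComplexity {F : Type*} [Field F] (f : LaurentSeries F) (m : ℕ) : ℕ :=
  subwordComplexity (fun n : ℕ => f.coeff (n : ℤ)) m

theorem Set.ncard_range_le_of_factorsThrough {ι β γ : Type*} [Nonempty ι] {f : ι → β}
    {g : ι → γ} (hfg : f.FactorsThrough g) (hg : (Set.range g).Finite) :
    (Set.range f).ncard ≤ (Set.range g).ncard := by
  have hrange : Set.range f = (fun y => f (Function.invFun g y)) '' Set.range g := by
    rw [← Set.range_comp]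
    congr 1
    funext j
    exact hfg (Function.invFun_eq ⟨j, rfl⟩).symm
  rw [hrange]
  exact Set.ncard_image_le hg

section Subword

variable {α β γ : Type*}

theorem subwordComplexity_eq_ncard_range_s7 (a : ℕ → α) (m : ℕ) :
    subwordComplexity a m = (Set.range fun j (i : Fin m) => a (j + i)).ncard := by
  unfold subwordComplexity
  congr 1
  ext w
  simp only [Set.mem_range, funext_iff, eq_comm]
  rfl

theorem subwordComplexity_comp_le [Finite α] (φ : α → β) (a : ℕ → α) (m : ℕ) :
    subwordComplexity (φ ∘ a) m ≤ subwordComplexity a m := by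
  simp only [subwordComplexity_eq_ncard_range_s7]
  refine Set.ncard_range_le_of_factorsThrough (fun j j' h => ?_) (Set.toFinite _)
  funext i
  exact congrArg φ (congrFun h i)

theorem subwordComplexity_zipWith_le [Finite α] [Finite β] (φ : α → β → γ) (a : ℕ → α)
    (b : ℕ → β) (m : ℕ) :
    subwordComplexity (fun n => φ (a n) (b n)) m ≤
      subwordComplexity a m * subwordComplexity b m := by
  simp only [subwordComplexity_eq_ncard_range_s7]
  calc _ ≤ (Set.range fun j =>
          ((fun (i : Fin m) => a (j + i)), fun (i : Fin m) => b (j + i))).ncard :=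
        Set.ncard_range_le_of_factorsThrough (fun j j' h => funext fun i => by
          simp only [Prod.mk.injEq, funext_iff] at h
          rw [h.1 i, h.2 i]) (Set.toFinite _)
    _ ≤ ((Set.range fun j (i : Fin m) => a (j + i)) ×ˢ
          (Set.range fun j (i : Fin m) => b (j + i))).ncard :=
        Set.ncard_le_ncard (Set.range_subset_iff.2 fun j => ⟨⟨j, rfl⟩, ⟨j, rfl⟩⟩)
          (Set.toFinite _)
    _ = _ := Set.ncard_prod

theorem subwordComplexity_shift_le [Finite α] (a : ℕ → α) (k m : ℕ) :
    subwordComplexity (fun n => a (n + k)) m ≤ subwordComplexity a m := by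
  simp only [subwordComplexity_eq_ncard_range_s7]
  refine Set.ncard_le_ncard (Set.range_subset_iff.2 fun j => ⟨j + k, ?_⟩) (Set.toFinite _)
  funext i
  simp only [add_right_comm]

theorem subwordComplexity_le_of_shift_eq [Finite α] {a c : ℕ → α} {k : ℕ}
    (h : ∀ n, c (n + k) = a n) (m : ℕ) :
    subwordComplexity c m ≤ subwordComplexity a m + k := by
  simp only [subwordComplexity_eq_ncard_range_s7]
  calc _ ≤ ((Set.range fun j (i : Fin m) => a (j + i)) ∪
          (fun j (i : Fin m) => c (j + i)) '' Set.Iio k).ncard := by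
        refine Set.ncard_le_ncard (Set.range_subset_iff.2 fun j => ?_) (Set.toFinite _)
        rcases lt_or_ge j k with hj | hj
        · exact Or.inr ⟨j, hj, rfl⟩
        · refine Or.inl ⟨j - k, funext fun i => ?_⟩
          simp only [← h, show j - k + i + k = j + i by omega]
    _ ≤ (Set.range fun j (i : Fin m) => a (j + i)).ncard + (Set.Iio k).ncard :=
        (Set.ncard_union_le _ _).trans
          (Nat.add_le_add_left (Set.ncard_image_le (Set.finite_Iio k)) _)
    _ = _ := by rw [Set.ncard_Iio_nat]

theorem subwordComplexity_le_of_determined [Finite α] [Finite β] {a : ℕ → β} {c : ℕ → α}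
    {d : ℕ} (hc : ∀ n n', (∀ i < d, c (n + i) = c (n' + i)) → a (n + d) = a (n' + d) →
      c (n + d) = c (n' + d)) (m : ℕ) :
    subwordComplexity c m ≤ Nat.card α ^ d * subwordComplexity a m := by
  simp only [subwordComplexity_eq_ncard_range_s7]
  calc _ ≤ (Set.range fun j =>
          ((fun (i : Fin d) => c (j + i)), fun (i : Fin m) => a (j + i))).ncard := by
        refine Set.ncard_range_le_of_factorsThrough (fun j j' h => ?_) (Set.toFinite _)
        simp only [Prod.mk.injEq, funext_iff, Fin.forall_iff] at h
        obtain ⟨hinit, ha⟩ := h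
        suffices ∀ t < m, c (j + t) = c (j' + t) from funext fun i => this i i.2
        intro t
        induction t using Nat.strong_induction_on with
        | _ t ih =>
          intro ht
          rcases lt_or_ge t d with htd | htd
          · exact hinit t htd
          · obtain ⟨n, rfl⟩ := Nat.exists_eq_add_of_le' htd
            simp only [← add_assoc] at ih ⊢
            refine hc _ _ (fun i hi => ?_) (by simpa only [add_assoc] using ha _ ht)
            simpa only [add_assoc] using ih (n + i) (by omega) (by omega)
    _ ≤ ((Set.univ : Set (Fin d → α)) ×ˢ (Set.range fun j (i : Fin m) => a (j + i))).ncard :=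
        Set.ncard_le_ncard (Set.range_subset_iff.2 fun j => ⟨trivial, ⟨j, rfl⟩⟩)
          (Set.toFinite _)
    _ = _ := by rw [Set.ncard_prod, Set.ncard_univ, Nat.card_fun, Nat.card_fin]

end Subword

/-- `(m + 1) ^ N` rather than `m ^ N`, so that the bound also covers `m = 0`. -/
def HasPolynomialGrowth (p : ℕ → ℕ) : Prop :=
  ∃ C N : ℕ, ∀ m, p m ≤ C * (m + 1) ^ N

namespace HasPolynomialGrowth

variable {p q : ℕ → ℕ}

theorem mono (hq : HasPolynomialGrowth q) (h : ∀ m, p m ≤ q m) : HasPolynomialGrowth p := by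
  obtain ⟨C, N, hC⟩ := hq
  exact ⟨C, N, fun m => (h m).trans (hC m)⟩

theorem mul (hp : HasPolynomialGrowth p) (hq : HasPolynomialGrowth q) :
    HasPolynomialGrowth fun m => p m * q m := by
  obtain ⟨C, N, hC⟩ := hp
  obtain ⟨D, M, hD⟩ := hq
  refine ⟨C * D, N + M, fun m => ?_⟩
  rw [pow_add, mul_mul_mul_comm]
  exact Nat.mul_le_mul (hC m) (hD m)

theorem const_mul (hp : HasPolynomialGrowth p) (c : ℕ) :
    HasPolynomialGrowth fun m => c * p m := by
  obtain ⟨C, N, hC⟩ := hp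
  refine ⟨c * C, N, fun m => ?_⟩
  rw [mul_assoc]
  exact Nat.mul_le_mul_left c (hC m)

theorem add_const (hp : HasPolynomialGrowth p) (k : ℕ) :
    HasPolynomialGrowth fun m => p m + k := by
  obtain ⟨C, N, hC⟩ := hp
  refine ⟨C + k, N, fun m => ?_⟩
  rw [add_mul]
  exact Nat.add_le_add (hC m) (Nat.le_mul_of_pos_right k (Nat.pow_pos m.succ_pos))

theorem of_real_bound {C : ℝ} {K : ℕ} (h : ∀ m : ℕ, 1 ≤ m → (p m : ℝ) ≤ C * (m : ℝ) ^ K) :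
    HasPolynomialGrowth p := by
  refine ⟨⌈C⌉₊ + p 0, K, fun m => ?_⟩
  rcases Nat.eq_zero_or_pos m with rfl | hm
  · simp
  · have hreal : (p m : ℝ) ≤ ⌈C⌉₊ * ((m : ℝ) + 1) ^ K :=
      calc (p m : ℝ) ≤ C * (m : ℝ) ^ K := h m hm
        _ ≤ ⌈C⌉₊ * (m : ℝ) ^ K := by gcongr; exact Nat.le_ceil C
        _ ≤ ⌈C⌉₊ * ((m : ℝ) + 1) ^ K := by gcongr; linarith
    have hnat : p m ≤ ⌈C⌉₊ * (m + 1) ^ K := by exact_mod_cast hreal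
    exact hnat.trans (Nat.mul_le_mul_right _ (Nat.le_add_right _ _))

theorem exists_real_bound (hp : HasPolynomialGrowth p) :
    ∃ (N : ℕ) (C : ℝ), 0 < C ∧ ∀ m : ℕ, 1 ≤ m → (p m : ℝ) ≤ C * (m : ℝ) ^ N := by
  obtain ⟨C, N, hC⟩ := hp
  refine ⟨N, ((C + 1) * 2 ^ N : ℕ), by positivity, fun m hm => ?_⟩
  have : p m ≤ (C + 1) * 2 ^ N * m ^ N :=
    calc p m ≤ C * (m + 1) ^ N := hC m
      _ ≤ (C + 1) * (2 * m) ^ N := by gcongr <;> omega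
      _ = (C + 1) * 2 ^ N * m ^ N := by ring
  exact_mod_cast this

end HasPolynomialGrowth

section LaurentSeries

open Polynomial
open scoped RatFunc

variable {F : Type*} [Field F]

theorem LaurentSeries.algebraMap_monomial (n : ℕ) (a : F) :
    algebraMap F[X] (LaurentSeries F) (monomial n a) = HahnSeries.single (n : ℤ) a := by
  simp [← C_mul_X_pow_eq_monomial]

theorem LaurentSeries.coeff_algebraMap_polynomial_mul (P : F[X]) (f : LaurentSeries F) (n : ℤ) :
    (algebraMap F[X] (LaurentSeries F) P * f).coeff n =
      ∑ i ∈ Finset.range (P.natDegree + 1), P.coeff i * f.coeff (n - i) := by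
  conv_lhs => rw [P.as_sum_range]
  simp only [map_sum, Finset.sum_mul, HahnSeries.coeff_sum, LaurentSeries.algebraMap_monomial,
    HahnSeries.coeff_single_mul]

def HasPolynomialComplexity (f : LaurentSeries F) : Prop :=
  HasPolynomialGrowth (laurentComplexity f)

namespace HasPolynomialComplexity

variable [Finite F] {f g : LaurentSeries F}

theorem add (hf : HasPolynomialComplexity f) (hg : HasPolynomialComplexity g) :
    HasPolynomialComplexity (f + g) :=
  (hf.mul hg).mono fun m =>
    subwordComplexity_zipWith_le (· + ·) (fun n : ℕ => f.coeff n) (fun n : ℕ => g.coeff n) m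

theorem single_mul (hf : HasPolynomialComplexity f) (z : ℤ) (r : F) :
    HasPolynomialComplexity (HahnSeries.single z r * f) := by
  obtain ⟨k, rfl | rfl⟩ := Int.eq_nat_or_neg z
  · refine (hf.add_const k).mono fun m => ?_
    have hshift : ∀ n : ℕ,
        (HahnSeries.single (k : ℤ) r * f).coeff (n + k : ℕ) = r * f.coeff n := by
      simp [HahnSeries.coeff_single_mul]
    calc laurentComplexity _ m ≤ subwordComplexity (fun n : ℕ => r * f.coeff n) m + k :=
          subwordComplexity_le_of_shift_eq hshift m
      _ ≤ laurentComplexity f m + k :=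
          Nat.add_le_add_right (subwordComplexity_comp_le (r * ·) _ m) k
  · refine hf.mono fun m => ?_
    calc laurentComplexity _ m
        = subwordComplexity ((r * ·) ∘ fun n : ℕ => f.coeff (n + k : ℕ)) m := by
          simp [laurentComplexity, HahnSeries.coeff_single_mul, Function.comp_def]
      _ ≤ subwordComplexity (fun n : ℕ => f.coeff (n + k : ℕ)) m :=
          subwordComplexity_comp_le _ _ m
      _ ≤ laurentComplexity f m := subwordComplexity_shift_le (fun n : ℕ => f.coeff n) k m

theorem polynomial_mul (hf : HasPolynomialComplexity f) (P : F[X]) :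
    HasPolynomialComplexity (algebraMap F[X] (LaurentSeries F) P * f) := by
  induction P using Polynomial.induction_on' with
  | add P Q hP hQ => rw [map_add, add_mul]; exact hP.add hQ
  | monomial n a => rw [LaurentSeries.algebraMap_monomial]; exact hf.single_mul n a

theorem inv_polynomial_mul (hf : HasPolynomialComplexity f) {Q : F[X]} (hQ : Q.coeff 0 ≠ 0) :
    HasPolynomialComplexity ((algebraMap F[X] (LaurentSeries F) Q)⁻¹ * f) := by
  set d := Q.natDegree
  set h := (algebraMap F[X] (LaurentSeries F) Q)⁻¹ * f
  have hQh : algebraMap F[X] (LaurentSeries F) Q * h = f :=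
    mul_inv_cancel_left₀ ((map_ne_zero_iff _ (FaithfulSMul.algebraMap_injective _ _)).2
      fun hQ0 => hQ (by simp [hQ0])) f
  -- `Q(0) ≠ 0` lets `Q * h = f` be solved for `h (k + d)` in terms of `f (k + d)` and the
  -- `d` preceding coefficients of `h`.
  have hrec : ∀ k : ℕ, Q.coeff 0 * h.coeff (k + d : ℕ) = f.coeff (k + d : ℕ) -
      ∑ i ∈ Finset.range d, Q.coeff (i + 1) * h.coeff (k + (d - 1 - i) : ℕ) := by
    intro k
    have hsum : ∀ i ∈ Finset.range d,
        Q.coeff (i + 1) * h.coeff ((k + d : ℕ) - (i + 1 : ℕ)) =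
          Q.coeff (i + 1) * h.coeff (k + (d - 1 - i) : ℕ) := by
      intro i hi
      rw [Finset.mem_range] at hi
      congr 2
      omega
    rw [← hQh, LaurentSeries.coeff_algebraMap_polynomial_mul, Finset.sum_range_succ',
      Finset.sum_congr rfl hsum, Nat.cast_zero, sub_zero, add_sub_cancel_left]
  refine (hf.const_mul (Nat.card F ^ d)).mono fun m =>
    subwordComplexity_le_of_determined (fun n n' hc ha => ?_) m
  apply mul_left_cancel₀ hQ
  rw [hrec, hrec, ha]
  congr 1
  refine Finset.sum_congr rfl fun i hi => ?_
  rw [hc _ (by rw [Finset.mem_range] at hi; omega)]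

theorem ratFunc_mul (hf : HasPolynomialComplexity f) (r : RatFunc F) :
    HasPolynomialComplexity (algebraMap (RatFunc F) (LaurentSeries F) r * f) := by
  obtain ⟨Q, hdenom, hQX⟩ :=
    r.denom.exists_eq_pow_rootMultiplicity_mul_and_not_dvd r.denom_ne_zero 0
  rw [map_zero, sub_zero] at hdenom hQX
  rw [X_dvd_iff] at hQX
  set V := rootMultiplicity 0 r.denom
  have hsplit : algebraMap (RatFunc F) (LaurentSeries F) r * f =
      HahnSeries.single (-V : ℤ) 1 * ((algebraMap F[X] (LaurentSeries F) Q)⁻¹ *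
        (algebraMap F[X] (LaurentSeries F) r.num * f)) := by
    have hXV : algebraMap F[X] (LaurentSeries F) (X ^ V) = HahnSeries.single (V : ℤ) 1 := by
      simp
    conv_lhs => rw [← r.num_div_denom, RatFunc.algebraMap_apply_div, hdenom, map_mul, hXV]
    rw [div_eq_mul_inv, mul_inv, HahnSeries.inv_single, inv_one]
    ring
  rw [hsplit]
  exact ((hf.polynomial_mul _).inv_polynomial_mul hQX).single_mul _ _

end HasPolynomialComplexity

end LaurentSeries

open scoped RatFunc in
theorem polynomial_complexity_class_vector_space_general
    (F : Type*) [Field F] [Fintype F] (f g : LaurentSeries F)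
    (K L : ℕ) (C₁ C₂ : ℝ)
    (hf : ∀ m : ℕ, 1 ≤ m → (laurentComplexity f m : ℝ) ≤ C₁ * (m : ℝ) ^ K)
    (hg : ∀ m : ℕ, 1 ≤ m → (laurentComplexity g m : ℝ) ≤ C₂ * (m : ℝ) ^ L)
    (r s : RatFunc F) :
    ∃ (N : ℕ) (C : ℝ), 0 < C ∧ ∀ m : ℕ, 1 ≤ m →
      (laurentComplexity
        ((algebraMap (RatFunc F) (LaurentSeries F) r) * f +
          (algebraMap (RatFunc F) (LaurentSeries F) s) * g) m : ℝ) ≤ C * (m : ℝ) ^ N := by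
  have hfP : HasPolynomialComplexity f := HasPolynomialGrowth.of_real_bound hf
  have hgP : HasPolynomialComplexity g := HasPolynomialGrowth.of_real_bound hg
  exact ((hfP.ratFunc_mul r).add (hgP.ratFunc_mul s)).exists_real_bound

open scoped RatFunc in
/-- The class 𝒫 of Laurent series of at most polynomial complexity is a vector
space over `F(T)`: any `F(T)`-linear combination of two Laurent series of
polynomial complexity again has polynomial complexity. -/
theorem polynomial_complexity_class_vector_space
    (F : Type*) [Field F] [Fintype F] (f g : LaurentSeries F)
    (K L : ℕ) (C₁ C₂ : ℝ) (hC₁ : 0 < C₁) (hC₂ : 0 < C₂)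
    (hf : ∀ m : ℕ, 1 ≤ m → (laurentComplexity f m : ℝ) ≤ C₁ * (m : ℝ) ^ K)
    (hg : ∀ m : ℕ, 1 ≤ m → (laurentComplexity g m : ℝ) ≤ C₂ * (m : ℝ) ^ L)
    (r s : RatFunc F) :
    ∃ (N : ℕ) (C : ℝ), 0 < C ∧ ∀ m : ℕ, 1 ≤ m →
      (laurentComplexity
        ((algebraMap (RatFunc F) (LaurentSeries F) r) * f +
          (algebraMap (RatFunc F) (LaurentSeries F) s) * g) m : ℝ) ≤ C * (m : ℝ) ^ N :=
  polynomial_complexity_class_vector_space_general F f g K L C₁ C₂ hf hg r s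
end

section
/- Let F be a finite field, let b : Polynomial F be a polynomial in T, and let f : LaurentSeries F. Let B : LaurentSeries F be the image of b under evaluation at T = X⁻¹ (i.e. B = Polynomial.aeval (X⁻¹) b, where X is the variable of LaurentSeries F, which is invertible since LaurentSeries F is a field). Then there exists a real constant M > 0 (depending only on b) such that for all m ≥ 1, p(B * f, m) ≤ M · p(f, m). -/
/-!
Since `X⁻¹ᵏ` shifts coefficients by `k`, the `n`-th coefficient of `b(X⁻¹) f` is
`∑_{k ≤ d} b_k f_{n+k}` with `d = deg b`: the coefficient sequence of `b(X⁻¹) f` is the image of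
that of `f` under a sliding block code of window `d + 1`. Hence every factor of length `m` of
`b(X⁻¹) f` is the image of a factor of length `m + d` of `f`, and a factor of length `m + d` is
determined by its prefix of length `m` and its last `d` letters, so
`p(b(X⁻¹) f, m) ≤ p(f, m + d) ≤ |F|ᵈ p(f, m)`.
-/

section SubwordComplexity

variable {A B : Type*}

def subwordFactors (a : ℕ → A) (m : ℕ) : Set (Fin m → A) :=
  { w | ∃ j : ℕ, ∀ i : Fin m, w i = a (j + i) }

theorem subwordComplexity_eq_ncard (a : ℕ → A) (m : ℕ) :
    subwordComplexity a m = (subwordFactors a m).ncard :=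
  rfl

variable [Finite A]

theorem subwordComplexity_succ_le (a : ℕ → A) (m : ℕ) :
    subwordComplexity a (m + 1) ≤ Nat.card A * subwordComplexity a m := by
  let snoc : (Fin m → A) × A → Fin (m + 1) → A := fun p => Fin.snoc p.1 p.2
  have hsub : subwordFactors a (m + 1) ⊆ snoc '' (subwordFactors a m ×ˢ Set.univ) := by
    rintro w ⟨j, hj⟩
    exact ⟨(Fin.init w, w (Fin.last m)), ⟨⟨j, fun i => hj _⟩, trivial⟩, Fin.snoc_init_self w⟩
  calc subwordComplexity a (m + 1)
      ≤ (snoc '' (subwordFactors a m ×ˢ Set.univ)).ncard :=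
        Set.ncard_le_ncard hsub (Set.toFinite _)
    _ ≤ (subwordFactors a m ×ˢ (Set.univ : Set A)).ncard := Set.ncard_image_le (Set.toFinite _)
    _ = Nat.card A * subwordComplexity a m := by
        rw [Set.ncard_prod, Set.ncard_univ, mul_comm, subwordComplexity_eq_ncard]

theorem subwordComplexity_add_le (a : ℕ → A) (m d : ℕ) :
    subwordComplexity a (m + d) ≤ Nat.card A ^ d * subwordComplexity a m := by
  induction d with
  | zero => simp
  | succ d ih =>
    calc subwordComplexity a (m + (d + 1))
        ≤ Nat.card A * subwordComplexity a (m + d) := subwordComplexity_succ_le a (m + d)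
      _ ≤ Nat.card A * (Nat.card A ^ d * subwordComplexity a m) := Nat.mul_le_mul_left _ ih
      _ = Nat.card A ^ (d + 1) * subwordComplexity a m := by ring

theorem subwordComplexity_le_of_slidingBlockCode {a : ℕ → A} {b : ℕ → B} {d : ℕ}
    (Φ : (Fin (d + 1) → A) → B) (hb : ∀ n, b n = Φ fun k => a (n + k)) (m : ℕ) :
    subwordComplexity b m ≤ subwordComplexity a (m + d) := by
  let slide : (Fin (m + d) → A) → Fin m → B := fun v i => Φ fun k => v ⟨i + k, by omega⟩
  have hsub : subwordFactors b m ⊆ slide '' subwordFactors a (m + d) := by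
    rintro w ⟨j, hj⟩
    refine ⟨fun i => a (j + i), ⟨j, fun i => rfl⟩, funext fun i => ?_⟩
    simp only [slide, hj, hb, add_assoc]
  exact (Set.ncard_le_ncard hsub (Set.toFinite _)).trans (Set.ncard_image_le (Set.toFinite _))

end SubwordComplexity

namespace LaurentSeries

variable {F : Type*} [Field F]

theorem single_one_one_inv :
    (HahnSeries.single (1 : ℤ) (1 : F) : LaurentSeries F)⁻¹ = HahnSeries.single (-1) 1 :=
  inv_eq_of_mul_eq_one_right <| by simp [HahnSeries.single_mul_single]

theorem coeff_single_neg_one_pow_mul (f : LaurentSeries F) (k : ℕ) (n : ℤ) :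
    ((HahnSeries.single (-1 : ℤ) (1 : F)) ^ k * f).coeff n = f.coeff (n + k) := by
  simpa [HahnSeries.single_pow] using
    HahnSeries.coeff_single_mul_add (r := (1 : F)) (x := f) (a := n + k) (b := -k)

theorem coeff_aeval_inv_single_one_mul (b : Polynomial F) (f : LaurentSeries F) (n : ℤ) :
    (Polynomial.aeval (HahnSeries.single (1 : ℤ) (1 : F) : LaurentSeries F)⁻¹ b * f).coeff n =
      ∑ k ∈ Finset.range (b.natDegree + 1), b.coeff k * f.coeff (n + k) := by
  simp only [single_one_one_inv, Polynomial.aeval_eq_sum_range, Finset.sum_mul, smul_mul_assoc,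
    HahnSeries.coeff_sum]
  refine Finset.sum_congr rfl fun k _ => ?_
  rw [Algebra.smul_def, algebraMap_apply, HahnSeries.C_mul_eq_smul, HahnSeries.coeff_smul,
    smul_eq_mul, coeff_single_neg_one_pow_mul]

end LaurentSeries

/-- Multiplying a Laurent series `f ∈ F((T⁻¹))` by a polynomial `b(T) ∈ F[T]`
(i.e. by `b(X⁻¹)` where `X = T⁻¹` is the variable of `LaurentSeries F`) increases
the complexity by at most a multiplicative constant depending only on `b`. -/
theorem complexity_polynomial_mul
    (F : Type*) [Field F] [Fintype F] (b : Polynomial F) (f : LaurentSeries F) :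
    ∃ M : ℝ, 0 < M ∧ ∀ m : ℕ, 1 ≤ m →
      (laurentComplexity
        ((Polynomial.aeval ((HahnSeries.single (1 : ℤ) (1 : F) : LaurentSeries F)⁻¹) b) * f)
        m : ℝ) ≤ M * (laurentComplexity f m : ℝ) := by
  have hcard : 0 < Nat.card F := Nat.card_pos
  refine ⟨Nat.card F ^ b.natDegree, by positivity, fun m _ => ?_⟩
  have hcode : ∀ n : ℕ,
      (Polynomial.aeval (HahnSeries.single (1 : ℤ) (1 : F) : LaurentSeries F)⁻¹ b * f).coeff n =
        ∑ k : Fin (b.natDegree + 1), b.coeff k * f.coeff ((n + k : ℕ) : ℤ) := fun n => by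
    rw [LaurentSeries.coeff_aeval_inv_single_one_mul, ← Fin.sum_univ_eq_sum_range]
    push_cast
    rfl
  have hle := (subwordComplexity_le_of_slidingBlockCode
    (fun v => ∑ k : Fin (b.natDegree + 1), b.coeff k * v k) hcode m).trans
    (subwordComplexity_add_le (fun n : ℕ => f.coeff (n : ℤ)) m b.natDegree)
  exact_mod_cast hle
end

section
/- Let F be a finite field of characteristic p, let k ≥ 1 be an integer and let a : ℕ → F. Define b : ℕ → F by b n = (∏_{i=0}^{k−1} (−(n : F) − i)) · a n, the coefficient sequence (up to the complexity-preserving shift by T^{−k}) of the k-th formal derivative with respect to T of the Laurent series f = ∑_{n≥0} a_n T^{−n}. Then there exists a real constant M > 0 such that p(b, m) ≤ M · p(a, m) for all m ≥ 1. -/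
/-!
The coefficient `∏_{i<k} (-n - i)` depends only on `n` modulo the characteristic `p` of `F`, so
the factor of `b` of length `m` starting at position `j` is determined by the factor of `a`
starting at `j` together with the residue `j mod p`. Hence `p(b, m) ≤ p · p(a, m)`.
-/

open Function

theorem periodic_natCast_ringChar (R : Type*) [NonAssocSemiring R] :
    Periodic (fun n : ℕ => (n : R)) (ringChar R) := fun n => by
  simp only [Nat.cast_add, ringChar.Nat.cast_ringChar, add_zero]

theorem Function.Periodic.apply_mod_add {α : Type*} {f : ℕ → α} {q : ℕ} (hf : Periodic f q)
    (j i : ℕ) : f (j % q + i) = f (j + i) := by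
  rw [← hf.map_mod_nat, Nat.mod_add_mod, hf.map_mod_nat]

theorem subwordComplexity_le_mul_of_periodic {A B : Type*} [Finite A] (a : ℕ → A)
    {g : ℕ → A → B} {q : ℕ} (hq : 0 < q) (hg : Periodic g q) (m : ℕ) :
    subwordComplexity (fun n => g n (a n)) m ≤ q * subwordComplexity a m := by
  set factorsA := { w : Fin m → A | ∃ j : ℕ, ∀ i : Fin m, w i = a (j + i) }
  have hcover : { w : Fin m → B | ∃ j : ℕ, ∀ i : Fin m, w i = g (j + i) (a (j + i)) } ⊆
      (fun p : (Fin m → A) × Fin q => fun i : Fin m => g (p.2 + i) (p.1 i)) ''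
        (factorsA ×ˢ Set.univ) := by
    rintro w ⟨j, hj⟩
    refine ⟨(fun i => a (j + i), ⟨j % q, Nat.mod_lt j hq⟩), ⟨⟨j, fun _ => rfl⟩, trivial⟩, ?_⟩
    funext i
    simp only [hj, hg.apply_mod_add]
  calc subwordComplexity (fun n => g n (a n)) m
      ≤ (factorsA ×ˢ (Set.univ : Set (Fin q))).ncard :=
        (Set.ncard_le_ncard hcover (Set.toFinite _)).trans (Set.ncard_image_le (Set.toFinite _))
    _ = q * subwordComplexity a m := by
        rw [Set.ncard_prod, Set.ncard_univ, Nat.card_eq_fintype_card, Fintype.card_fin, mul_comm]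
        rfl

theorem complexity_formal_derivative_general
    (F : Type*) [Field F] [Fintype F] (k : ℕ) (a : ℕ → F)
    (b : ℕ → F)
    (hb : ∀ n : ℕ, b n = (∏ i ∈ Finset.range k, (-(n : F) - (i : F))) * a n) :
    ∃ M : ℝ, 0 < M ∧ ∀ m : ℕ, 1 ≤ m →
      (subwordComplexity b m : ℝ) ≤ M * (subwordComplexity a m : ℝ) := by
  obtain rfl : b = fun n : ℕ => (∏ i ∈ Finset.range k, (-(n : F) - (i : F))) * a n := funext hb
  have hp : 0 < ringChar F := Nat.pos_of_ne_zero (CharP.ringChar_ne_zero_of_finite F)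
  have hperiodic : Periodic (fun n : ℕ => ((∏ i ∈ Finset.range k, (-(n : F) - (i : F))) * ·))
      (ringChar F) :=
    (periodic_natCast_ringChar F).comp fun x y => (∏ i ∈ Finset.range k, (-x - (i : F))) * y
  refine ⟨ringChar F, by exact_mod_cast hp, fun m _ => ?_⟩
  exact_mod_cast subwordComplexity_le_mul_of_periodic a hp hperiodic m

/-- The coefficient sequence of the `k`-th formal derivative of a Laurent series,
namely `b n = (−n)(−n−1)⋯(−n−k+1)·a n`, has complexity at most a constant multiple
of that of `a`. -/
theorem complexity_formal_derivative
    (F : Type*) [Field F] [Fintype F] (k : ℕ) (hk : 1 ≤ k) (a : ℕ → F)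
    (b : ℕ → F)
    (hb : ∀ n : ℕ, b n = (∏ i ∈ Finset.range k, (-(n : F) - (i : F))) * a n) :
    ∃ M : ℝ, 0 < M ∧ ∀ m : ℕ, 1 ≤ m →
      (subwordComplexity b m : ℝ) ≤ M * (subwordComplexity a m : ℝ) :=
  complexity_formal_derivative_general F k a b hb
end

section
/- Let n and k be positive integers with k < 2^n − 1. Then k can be written as ∑_{j ∈ J} (2^j − 1) for some finite set J of positive integers if and only if k + (2^n − 1) can be written as ∑_{i ∈ I} (2^i − 1) for some finite set I of positive integers. Moreover, in the latter case n ∈ I and k = ∑_{i ∈ I \ {n}} (2^i − 1). -/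
/-!
The terms `2^i - 1` with `i < m` sum to less than `2^m`, while a single term with `i ≥ m` is
already at least `2^m - 1`. Since `2^n ≤ k + (2^n - 1) < 2^(n+1) - 1`, a representation of
`k + (2^n - 1)` uses only exponents `≤ n` and must use `n` itself; removing that term leaves a
representation of `k`. Conversely, a representation of `k < 2^n - 1` uses only exponents `< n`,
so the term for `n` can be added to it.
-/

open Finset

theorem sum_two_pow_sub_one_lt_two_pow {S : Finset ℕ} {n : ℕ} (h : ∀ i ∈ S, i < n) :
    ∑ i ∈ S, (2 ^ i - 1) < 2 ^ n :=
  calc ∑ i ∈ S, (2 ^ i - 1)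
      ≤ ∑ i ∈ range n, (2 ^ i - 1) :=
        sum_le_sum_of_subset fun i hi => mem_range.mpr (h i hi)
    _ ≤ ∑ i ∈ range n, 2 ^ i := sum_le_sum fun i _ => Nat.sub_le _ _
    _ < 2 ^ n := by rw [Nat.geomSum_eq le_rfl]; have := Nat.one_le_two_pow (n := n); omega

theorem lt_of_mem_of_sum_two_pow_sub_one_lt {S : Finset ℕ} {i m : ℕ} (hi : i ∈ S)
    (h : ∑ j ∈ S, (2 ^ j - 1) < 2 ^ m - 1) : i < m := by
  by_contra! hmi
  have hterm : 2 ^ i - 1 ≤ ∑ j ∈ S, (2 ^ j - 1) :=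
    single_le_sum (f := fun j => 2 ^ j - 1) (fun _ _ => Nat.zero_le _) hi
  have hpow : 2 ^ m ≤ 2 ^ i := Nat.pow_le_pow_right two_pos hmi
  omega

theorem mem_of_two_pow_le_sum_two_pow_sub_one {S : Finset ℕ} {n : ℕ} (hle : ∀ i ∈ S, i ≤ n)
    (h : 2 ^ n ≤ ∑ i ∈ S, (2 ^ i - 1)) : n ∈ S := by
  by_contra hn
  have hlt : ∀ i ∈ S, i < n := fun i hi => (hle i hi).lt_of_ne fun h => hn (h ▸ hi)
  exact (sum_two_pow_sub_one_lt_two_pow hlt).not_ge h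

theorem mem_and_eq_sum_erase_of_add_two_pow_sub_one_eq_sum {I : Finset ℕ} {n k : ℕ}
    (hk : 1 ≤ k) (hlt : k < 2 ^ n - 1) (hsum : k + (2 ^ n - 1) = ∑ i ∈ I, (2 ^ i - 1)) :
    n ∈ I ∧ k = ∑ i ∈ I.erase n, (2 ^ i - 1) := by
  have hpow : 2 ^ (n + 1) = 2 * 2 ^ n := by ring
  have hle : ∀ i ∈ I, i ≤ n := fun i hi =>
    Nat.lt_succ_iff.mp (lt_of_mem_of_sum_two_pow_sub_one_lt hi (by omega))
  have hnI : n ∈ I := mem_of_two_pow_le_sum_two_pow_sub_one hle (by omega)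
  refine ⟨hnI, ?_⟩
  rw [← sum_erase_add I _ hnI] at hsum
  omega

theorem add_two_pow_sub_one_eq_sum_insert {J : Finset ℕ} {n k : ℕ} (hlt : k < 2 ^ n - 1)
    (hsum : k = ∑ j ∈ J, (2 ^ j - 1)) :
    k + (2 ^ n - 1) = ∑ i ∈ insert n J, (2 ^ i - 1) := by
  have hnJ : n ∉ J := fun h => (lt_of_mem_of_sum_two_pow_sub_one_lt h (hsum ▸ hlt)).false
  rw [sum_insert hnJ, hsum, add_comm]

/-- For positive integers `n, k` with `k < 2^n − 1`: `k` is a sum of distinct terms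
`2^j − 1` (with `j ≥ 1`) iff `k + (2^n − 1)` is; moreover any such representation
`k + (2^n − 1) = ∑_{i ∈ I} (2^i − 1)` contains `n`, and `k = ∑_{i ∈ I \ {n}} (2^i − 1)`. -/
theorem shift_representation_two (n k : ℕ) (hn : 1 ≤ n) (hk : 1 ≤ k)
    (hlt : k < 2 ^ n - 1) :
    ((∃ J : Finset ℕ, (∀ j ∈ J, 1 ≤ j) ∧ k = ∑ j ∈ J, (2 ^ j - 1)) ↔
      (∃ I : Finset ℕ, (∀ i ∈ I, 1 ≤ i) ∧ k + (2 ^ n - 1) = ∑ i ∈ I, (2 ^ i - 1))) ∧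
    (∀ I : Finset ℕ, (∀ i ∈ I, 1 ≤ i) → k + (2 ^ n - 1) = ∑ i ∈ I, (2 ^ i - 1) →
      n ∈ I ∧ k = ∑ i ∈ I.erase n, (2 ^ i - 1)) := by
  have shifted (I : Finset ℕ) (hsum : k + (2 ^ n - 1) = ∑ i ∈ I, (2 ^ i - 1)) :=
    mem_and_eq_sum_erase_of_add_two_pow_sub_one_eq_sum hk hlt hsum
  refine ⟨⟨?_, ?_⟩, fun I _ hsum => shifted I hsum⟩
  · rintro ⟨J, hJ, hsum⟩
    refine ⟨insert n J, ?_, add_two_pow_sub_one_eq_sum_insert hlt hsum⟩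
    simpa only [mem_insert, forall_eq_or_imp] using ⟨hn, hJ⟩
  · rintro ⟨I, hI, hsum⟩
    exact ⟨I.erase n, fun i hi => hI i (mem_of_mem_erase hi), (shifted I hsum).2⟩
end

section
/- Let q ≥ 3 be an integer (in the paper, a prime power), and let n and k be positive integers with k < q^n − 1. Then k can be written as ∑_{j ∈ J} (q^j − 1) for some finite set J of positive integers if and only if k + (q^n − 1) can be written as ∑_{i ∈ I} (q^i − 1) for some finite set I of positive integers. Moreover, for any such I one has n ∈ I, and if k = ∑_{j ∈ J}(q^j − 1) then n ∉ J and I = J ∪ {n} works. -/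
/-!
Write `f j = q ^ j - 1`. Since `k < f n`, a representation of `k` cannot use `n`, so adding
`n` to it represents `k + f n`. Conversely, a representation `I` of `k + f n` must contain `n`:
an index `i > n` alone contributes `f i ≥ 3 q ^ n - 1 > k + f n`, while indices below `n`
sum to less than `q ^ n` (compare with `∑ q ^ i`), hence to at most `f n < k + f n`.
Removing `n` from `I` then represents `k`.
-/

open Finset

lemma sum_pow_sub_one_lt_pow {q n : ℕ} (hq : 2 ≤ q) {s : Finset ℕ} (hs : ∀ i ∈ s, i < n) :
    ∑ i ∈ s, (q ^ i - 1) < q ^ n :=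
  (sum_le_sum fun i _ => Nat.sub_le (q ^ i) 1).trans_lt (Nat.geomSum_lt hq hs)

lemma not_mem_of_sum_pow_sub_one_lt {q n : ℕ} {s : Finset ℕ}
    (hs : ∑ i ∈ s, (q ^ i - 1) < q ^ n - 1) : n ∉ s := fun hn =>
  (single_le_sum (f := fun i => q ^ i - 1) (fun _ _ => Nat.zero_le _) hn).not_gt hs

lemma mem_of_sum_pow_sub_one_eq_add {q n k : ℕ} (hq : 3 ≤ q) (hk : 1 ≤ k)
    (hlt : k < q ^ n - 1) {s : Finset ℕ} (hs : ∑ i ∈ s, (q ^ i - 1) = k + (q ^ n - 1)) :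
    n ∈ s := by
  by_contra hn
  by_cases hbig : ∃ i ∈ s, n < i
  · obtain ⟨i, hi, hni⟩ := hbig
    have hsingle : q ^ i - 1 ≤ ∑ i ∈ s, (q ^ i - 1) :=
      single_le_sum (f := fun i => q ^ i - 1) (fun _ _ => Nat.zero_le _) hi
    have hpow : 3 * q ^ n ≤ q ^ i :=
      calc 3 * q ^ n ≤ q * q ^ n := Nat.mul_le_mul_right _ hq
        _ = q ^ (n + 1) := (pow_succ' q n).symm
        _ ≤ q ^ i := Nat.pow_le_pow_right (by omega) hni
    omega
  · simp only [not_exists, not_and, not_lt] at hbig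
    have hsmall := sum_pow_sub_one_lt_pow (by omega : 2 ≤ q)
      fun i hi => lt_of_le_of_ne (hbig i hi) fun h => hn (h ▸ hi)
    omega

theorem shift_representation_q_general (q : ℕ) (hq : 3 ≤ q) (n k : ℕ) (hk : 1 ≤ k)
    (hlt : k < q ^ n - 1) :
    ((∃ J : Finset ℕ, (∀ j ∈ J, 1 ≤ j) ∧ k = ∑ j ∈ J, (q ^ j - 1)) ↔
      (∃ I : Finset ℕ, (∀ i ∈ I, 1 ≤ i) ∧ k + (q ^ n - 1) = ∑ i ∈ I, (q ^ i - 1))) ∧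
    (∀ I : Finset ℕ, (∀ i ∈ I, 1 ≤ i) → k + (q ^ n - 1) = ∑ i ∈ I, (q ^ i - 1) →
      n ∈ I) ∧
    (∀ J : Finset ℕ, (∀ j ∈ J, 1 ≤ j) → k = ∑ j ∈ J, (q ^ j - 1) →
      n ∉ J ∧ k + (q ^ n - 1) = ∑ i ∈ insert n J, (q ^ i - 1)) := by
  have hn : 1 ≤ n := Nat.one_le_iff_ne_zero.mpr fun h => by simp [h] at hlt
  have insert_n : ∀ J : Finset ℕ, k = ∑ j ∈ J, (q ^ j - 1) →
      n ∉ J ∧ k + (q ^ n - 1) = ∑ i ∈ insert n J, (q ^ i - 1) := fun J hsum => by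
    have hnJ : n ∉ J := not_mem_of_sum_pow_sub_one_lt (hsum ▸ hlt)
    exact ⟨hnJ, by rw [sum_insert hnJ, ← hsum, add_comm]⟩
  have mem_n : ∀ I : Finset ℕ, k + (q ^ n - 1) = ∑ i ∈ I, (q ^ i - 1) → n ∈ I :=
    fun I hsum => mem_of_sum_pow_sub_one_eq_add hq hk hlt hsum.symm
  refine ⟨⟨?_, ?_⟩, fun I _ => mem_n I, fun J _ => insert_n J⟩
  · rintro ⟨J, hJ, hsum⟩
    refine ⟨insert n J, ?_, (insert_n J hsum).2⟩
    simpa only [mem_insert, forall_eq_or_imp] using ⟨hn, hJ⟩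
  · rintro ⟨I, hI, hsum⟩
    refine ⟨I.erase n, fun j hj => hI j (mem_of_mem_erase hj), ?_⟩
    have herase := sum_erase_add I (fun i => q ^ i - 1) (mem_n I hsum)
    omega

/-- For `q ≥ 3` and positive integers `n, k` with `k < q^n − 1`: `k` is a sum of
distinct terms `q^j − 1` (with `j ≥ 1`) iff `k + (q^n − 1)` is; moreover any such
representation of `k + (q^n − 1)` contains `n`, and if `k = ∑_{j ∈ J}(q^j − 1)`
then `n ∉ J` and `I = J ∪ {n}` represents `k + (q^n − 1)`. -/
theorem shift_representation_q (q : ℕ) (hq : 3 ≤ q) (n k : ℕ) (hn : 1 ≤ n) (hk : 1 ≤ k)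
    (hlt : k < q ^ n - 1) :
    ((∃ J : Finset ℕ, (∀ j ∈ J, 1 ≤ j) ∧ k = ∑ j ∈ J, (q ^ j - 1)) ↔
      (∃ I : Finset ℕ, (∀ i ∈ I, 1 ≤ i) ∧ k + (q ^ n - 1) = ∑ i ∈ I, (q ^ i - 1))) ∧
    (∀ I : Finset ℕ, (∀ i ∈ I, 1 ≤ i) → k + (q ^ n - 1) = ∑ i ∈ I, (q ^ i - 1) →
      n ∈ I) ∧
    (∀ J : Finset ℕ, (∀ j ∈ J, 1 ≤ j) → k = ∑ j ∈ J, (q ^ j - 1) →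
      n ∉ J ∧ k + (q ^ n - 1) = ∑ i ∈ insert n J, (q ^ i - 1)) :=
  shift_representation_q_general q hq n k hk hlt
end

section
/- Let q ≥ 3 be an integer (in the paper, a prime power), let n be a positive integer, and let k be an integer with 2(q^n − 1) ≤ k ≤ q^{n+1} − 2. Then there is no finite set J of positive integers such that k = ∑_{j ∈ J} (q^j − 1). (Equivalently, the corresponding coefficient p_k of 1/Π_q vanishes.) -/
/-!
A set `J` representing `k` either lies in `[1, n]`, and then its sum is at most
`∑_{j=1}^{n} (q^j - 1) < 2 (q^n - 1)`, or it contains some `j > n`, whose term alone is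
already `q^j - 1 ≥ q^{n+1} - 1 > k`.
-/

open Finset

theorem sum_Icc_pow_sub_one_lt {q n : ℕ} (hq : 2 ≤ q) (hn : 1 ≤ n) :
    ∑ j ∈ Icc 1 n, (q ^ j - 1) < 2 * (q ^ n - 1) := by
  induction n, hn using Nat.le_induction with
  | base => simp only [Icc_self, sum_singleton, pow_one]; omega
  | succ n hn ih =>
    rw [sum_Icc_succ_top (by omega)]
    have hpos : 1 ≤ q ^ n := Nat.one_le_pow _ _ (by omega)
    have hgrow : 2 * q ^ n ≤ q ^ (n + 1) := by
      rw [pow_succ']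
      exact Nat.mul_le_mul_right _ hq
    omega

/-- For `q ≥ 3`, `n ≥ 1` and `2(q^n − 1) ≤ k ≤ q^{n+1} − 2`, the integer `k` is not
a sum of distinct terms `q^j − 1` with `j ≥ 1` (so the corresponding coefficient
of `1/Π_q` vanishes). -/
theorem no_representation_in_gap (q : ℕ) (hq : 3 ≤ q) (n : ℕ) (hn : 1 ≤ n) (k : ℕ)
    (hk₁ : 2 * (q ^ n - 1) ≤ k) (hk₂ : k ≤ q ^ (n + 1) - 2) :
    ¬ ∃ J : Finset ℕ, (∀ j ∈ J, 1 ≤ j) ∧ k = ∑ j ∈ J, (q ^ j - 1) := by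
  rintro ⟨J, hJ, rfl⟩
  by_cases hsub : J ⊆ Icc 1 n
  · have hle : ∑ j ∈ J, (q ^ j - 1) ≤ ∑ j ∈ Icc 1 n, (q ^ j - 1) :=
      sum_le_sum_of_subset hsub
    have hlt := sum_Icc_pow_sub_one_lt (q := q) (by omega) hn
    omega
  · obtain ⟨j, hjJ, hjn⟩ := not_subset.mp hsub
    have hj : n + 1 ≤ j := by
      have := hJ j hjJ
      rw [mem_Icc] at hjn
      omega
    have hpow : q ^ (n + 1) ≤ q ^ j := Nat.pow_le_pow_right (by omega) hj
    have hterm : q ^ j - 1 ≤ ∑ i ∈ J, (q ^ i - 1) :=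
      single_le_sum (f := fun i => q ^ i - 1) (fun _ _ => Nat.zero_le _) hjJ
    have hbig : q ≤ q ^ (n + 1) := Nat.le_self_pow (by omega) q
    omega
end
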